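/- arXiv:2303.18073 — 5 statements merged into one kernel-verified Lean document; each statement's English description precedes it below -/
import Mathlib

section
/- Let $c_i \geq 0$ be a sequence of nonnegative reals and let $0 < b < a$. Then $\sum_{i=1}^{N} i^a c_i = \mathcal{O}(N^b)$ as $N \to \infty$ if and only if $\sum_{i=N+1}^{\infty} c_i = \mathcal{O}(N^{b-a})$ as $N \to \infty$. -/
/-!
Both directions compare sums over the dyadic blocks `(n, 2n]`, on which `i ^ a` lies between
`n ^ a` and `2 ^ a * n ^ a`. A bound `O(N ^ b)` on the weighted partial sums bounds the block
`(n, 2n]` of `c` by `O(n ^ (b - a))`; these bounds decay geometrically with ratio `2 ^ (b - a) < 1`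
along `N, 2N, 4N, …`, so they add up to the tail bound. Conversely a tail bound `O(N ^ (b - a))`
bounds the weighted block `(n, 2n]` by `O(n ^ b)`; these grow geometrically with ratio `2 ^ b > 1`,
so their sum up to `N` is dominated by the last one.
-/

open Filter Asymptotics Finset

lemma rpow_two_pow_mul {x : ℝ} (hx : 0 ≤ x) (k : ℕ) (s : ℝ) :
    ((2 : ℝ) ^ k * x) ^ s = ((2 : ℝ) ^ s) ^ k * x ^ s := by
  rw [Real.mul_rpow (by positivity) hx, ← Real.rpow_natCast_mul (by norm_num), mul_comm (k : ℝ),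
    Real.rpow_mul_natCast (by norm_num)]

lemma sum_range_add_eq_sum_Ioc {M : Type*} [AddCommMonoid M] (f : ℕ → M) (n m : ℕ) :
    ∑ i ∈ range m, f (n + 1 + i) = ∑ i ∈ Ioc n (n + m), f i := by
  rw [← Ico_add_one_add_one_eq_Ioc, sum_Ico_eq_sum_range, add_right_comm, Nat.add_sub_cancel_left]

lemma isBigO_natCast_rpow_iff {f : ℕ → ℝ} (hf : ∀ n, 0 ≤ f n) (s : ℝ) :
    f =O[atTop] (fun n : ℕ => (n : ℝ) ^ s) ↔ ∃ C, 0 ≤ C ∧ ∀ n, 0 < n → f n ≤ C * (n : ℝ) ^ s := by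
  constructor
  · intro h
    obtain ⟨C, hC0, hC⟩ := bound_of_isBigO_nat_atTop h
    refine ⟨C, hC0.le, fun n hn => ?_⟩
    have hpos : 0 < (n : ℝ) ^ s := Real.rpow_pos_of_pos (by exact_mod_cast hn) s
    simpa only [Real.norm_of_nonneg (hf n), Real.norm_of_nonneg hpos.le] using hC hpos.ne'
  · rintro ⟨C, -, hC⟩
    refine IsBigO.of_bound C ((eventually_gt_atTop 0).mono fun n hn => ?_)
    rw [Real.norm_of_nonneg (hf n), Real.norm_of_nonneg (by positivity)]
    exact hC n hn

lemma sum_Ioc_two_pow_mul_le {u : ℕ → ℝ} {C s : ℝ}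
    (hu : ∀ n : ℕ, 0 < n → ∑ i ∈ Ioc n (2 * n), u i ≤ C * (n : ℝ) ^ s)
    {N : ℕ} (hN : 0 < N) (m : ℕ) :
    ∑ i ∈ Ioc N (2 ^ m * N), u i ≤ C * (N : ℝ) ^ s * ∑ k ∈ range m, ((2 : ℝ) ^ s) ^ k := by
  induction m with
  | zero => simp
  | succ m ih =>
    have hblock := hu (2 ^ m * N) (by positivity)
    rw [show 2 * (2 ^ m * N) = 2 ^ (m + 1) * N by ring, Nat.cast_mul, Nat.cast_pow,
      Nat.cast_ofNat, rpow_two_pow_mul (Nat.cast_nonneg N)] at hblock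
    rw [← sum_Ioc_consecutive u (Nat.le_mul_of_pos_left N (by positivity))
      (Nat.mul_le_mul_right N (Nat.pow_le_pow_right two_pos m.le_succ)), sum_range_succ]
    calc _ ≤ C * (N : ℝ) ^ s * ∑ k ∈ range m, ((2 : ℝ) ^ s) ^ k
          + C * (((2 : ℝ) ^ s) ^ m * (N : ℝ) ^ s) := add_le_add ih hblock
      _ = _ := by ring

section Tauberian

variable {c : ℕ → ℝ} {a b : ℝ}

lemma sum_Ioc_two_mul_le_of_weighted (hc : ∀ i, 0 ≤ c i) (ha : 0 ≤ a) {K : ℝ}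
    (hS : ∀ N : ℕ, 0 < N → ∑ i ∈ Icc 1 N, (i : ℝ) ^ a * c i ≤ K * (N : ℝ) ^ b)
    {n : ℕ} (hn : 0 < n) :
    ∑ i ∈ Ioc n (2 * n), c i ≤ K * 2 ^ b * (n : ℝ) ^ (b - a) := by
  have hn' : (0 : ℝ) < n := by exact_mod_cast hn
  have hweight :
      (n : ℝ) ^ a * ∑ i ∈ Ioc n (2 * n), c i ≤ ∑ i ∈ Icc 1 (2 * n), (i : ℝ) ^ a * c i :=
    calc (n : ℝ) ^ a * ∑ i ∈ Ioc n (2 * n), c i ≤ ∑ i ∈ Ioc n (2 * n), (i : ℝ) ^ a * c i := by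
          rw [mul_sum]
          refine sum_le_sum fun i hi => mul_le_mul_of_nonneg_right ?_ (hc i)
          exact Real.rpow_le_rpow hn'.le (by exact_mod_cast (mem_Ioc.1 hi).1.le) ha
      _ ≤ ∑ i ∈ Icc 1 (2 * n), (i : ℝ) ^ a * c i :=
          sum_le_sum_of_subset_of_nonneg
            (fun i hi => by simp only [mem_Ioc, mem_Icc] at hi ⊢; omega)
            fun i _ _ => mul_nonneg (by positivity) (hc i)
  have hS2n := hS (2 * n) (by omega)
  rw [Nat.cast_mul, Nat.cast_ofNat, Real.mul_rpow (by norm_num) hn'.le] at hS2n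
  rw [Real.rpow_sub hn', ← mul_div_assoc, le_div_iff₀ (by positivity)]
  linarith

lemma sum_range_tail_le_of_weighted (hc : ∀ i, 0 ≤ c i) (ha : 0 ≤ a) (hba : b < a) {K : ℝ}
    (hK : 0 ≤ K) (hS : ∀ N : ℕ, 0 < N → ∑ i ∈ Icc 1 N, (i : ℝ) ^ a * c i ≤ K * (N : ℝ) ^ b)
    {N : ℕ} (hN : 0 < N) (M : ℕ) :
    ∑ i ∈ range M, c (N + 1 + i) ≤ K * 2 ^ b / (1 - 2 ^ (b - a)) * (N : ℝ) ^ (b - a) := by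
  set r : ℝ := 2 ^ (b - a)
  have hr0 : 0 < r := by positivity
  have hr1 : r < 1 := Real.rpow_lt_one_of_one_lt_of_neg (by norm_num) (by linarith)
  have hNM : N + M ≤ 2 ^ M * N := by
    nlinarith [M.lt_two_pow_self, Nat.one_le_two_pow (n := M)]
  calc ∑ i ∈ range M, c (N + 1 + i) = ∑ i ∈ Ioc N (N + M), c i := sum_range_add_eq_sum_Ioc c N M
    _ ≤ ∑ i ∈ Ioc N (2 ^ M * N), c i :=
        sum_le_sum_of_subset_of_nonneg (Ioc_subset_Ioc_right hNM) fun i _ _ => hc i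
    _ ≤ K * 2 ^ b * (N : ℝ) ^ (b - a) * ∑ k ∈ range M, r ^ k :=
        sum_Ioc_two_pow_mul_le (fun n hn => sum_Ioc_two_mul_le_of_weighted hc ha hS hn) hN M
    _ ≤ K * 2 ^ b * (N : ℝ) ^ (b - a) * (1 - r)⁻¹ := by
        gcongr
        simpa [← range_eq_Ico] using geom_sum_Ico_le_of_lt_one (m := 0) (n := M) hr0.le hr1
    _ = K * 2 ^ b / (1 - r) * (N : ℝ) ^ (b - a) := by ring

theorem tail_isBigO_of_weighted_isBigO (hc : ∀ i, 0 ≤ c i) (ha : 0 ≤ a) (hba : b < a)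
    (h : (fun N : ℕ => ∑ i ∈ Icc 1 N, (i : ℝ) ^ a * c i) =O[atTop] (fun N : ℕ => (N : ℝ) ^ b)) :
    Summable c ∧
      (fun N : ℕ => ∑' i : ℕ, c (N + 1 + i)) =O[atTop] (fun N : ℕ => (N : ℝ) ^ (b - a)) := by
  obtain ⟨K, hK, hS⟩ := (isBigO_natCast_rpow_iff
    (fun N => sum_nonneg fun i _ => mul_nonneg (by positivity) (hc i)) b).1 h
  have hpartial := fun {N} (hN : 0 < N) => sum_range_tail_le_of_weighted hc ha hba hK hS hN
  have hr1 : (2 : ℝ) ^ (b - a) < 1 := Real.rpow_lt_one_of_one_lt_of_neg one_lt_two (by linarith)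
  refine ⟨?_, (isBigO_natCast_rpow_iff (fun N => tsum_nonneg fun i => hc _) _).2
    ⟨_, div_nonneg (by positivity) (sub_nonneg.2 hr1.le),
      fun N hN => Real.tsum_le_of_sum_range_le (fun i => hc _) (hpartial hN)⟩⟩
  have hshift : Summable fun i => c (i + 2) :=
    (summable_of_sum_range_le (fun i => hc _) (hpartial one_pos)).congr fun i => by ring_nf
  exact (summable_nat_add_iff 2).1 hshift

lemma sum_Ioc_two_mul_weighted_le_of_tail (hc : ∀ i, 0 ≤ c i) (ha : 0 ≤ a) (hsum : Summable c)
    {C : ℝ} (hT : ∀ N : ℕ, 0 < N → ∑' i : ℕ, c (N + 1 + i) ≤ C * (N : ℝ) ^ (b - a))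
    {n : ℕ} (hn : 0 < n) :
    ∑ i ∈ Ioc n (2 * n), (i : ℝ) ^ a * c i ≤ C * 2 ^ a * (n : ℝ) ^ b := by
  have hn' : (0 : ℝ) < n := by exact_mod_cast hn
  have hblock : ∑ i ∈ Ioc n (2 * n), c i ≤ ∑' i : ℕ, c (n + 1 + i) := by
    rw [two_mul, ← sum_range_add_eq_sum_Ioc]
    exact (hsum.comp_injective (add_right_injective (n + 1))).sum_le_tsum _ fun i _ => hc _
  calc ∑ i ∈ Ioc n (2 * n), (i : ℝ) ^ a * c i
        ≤ ∑ i ∈ Ioc n (2 * n), ((2 * n : ℕ) : ℝ) ^ a * c i := by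
        refine sum_le_sum fun i hi => mul_le_mul_of_nonneg_right ?_ (hc i)
        exact Real.rpow_le_rpow (by positivity) (by exact_mod_cast (mem_Ioc.1 hi).2) ha
    _ = ((2 * n : ℕ) : ℝ) ^ a * ∑ i ∈ Ioc n (2 * n), c i := by rw [mul_sum]
    _ ≤ ((2 * n : ℕ) : ℝ) ^ a * (C * (n : ℝ) ^ (b - a)) := by
        gcongr
        exact hblock.trans (hT n hn)
    _ = C * 2 ^ a * (n : ℝ) ^ b := by
        rw [Nat.cast_mul, Nat.cast_ofNat, Real.mul_rpow (by norm_num) hn'.le, Real.rpow_sub hn']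
        field_simp

lemma weighted_sum_le_of_tail (hc : ∀ i, 0 ≤ c i) (ha : 0 ≤ a) (hb : 0 < b) (hsum : Summable c)
    {C : ℝ} (hC : 0 ≤ C) (hT : ∀ N : ℕ, 0 < N → ∑' i : ℕ, c (N + 1 + i) ≤ C * (N : ℝ) ^ (b - a))
    {N : ℕ} (hN : 0 < N) :
    ∑ i ∈ Icc 1 N, (i : ℝ) ^ a * c i
      ≤ (c 1 + C * 2 ^ a * (2 ^ b / (2 ^ b - 1))) * (N : ℝ) ^ b := by
  set r : ℝ := 2 ^ b
  have hr1 : 1 < r := Real.one_lt_rpow (by norm_num) hb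
  set m := Nat.log 2 N + 1
  have hNm : N ≤ 2 ^ m := (Nat.lt_pow_succ_log_self one_lt_two N).le
  have hmN : 2 ^ m ≤ 2 * N := by
    rw [pow_succ, mul_comm]
    exact Nat.mul_le_mul_left 2 (Nat.pow_log_le_self 2 hN.ne')
  have hrm : r ^ m ≤ r * (N : ℝ) ^ b := by
    have hpow : r ^ m = ((2 : ℝ) ^ m) ^ b := by
      simpa using (rpow_two_pow_mul zero_le_one m b).symm
    rw [hpow, ← Real.mul_rpow (by norm_num) (Nat.cast_nonneg N)]
    exact Real.rpow_le_rpow (by positivity) (by exact_mod_cast hmN) hb.le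
  have hgeom : ∑ k ∈ range m, r ^ k ≤ r ^ m / (r - 1) := by
    rw [geom_sum_eq hr1.ne']
    gcongr
    linarith
  have hNb : 1 ≤ (N : ℝ) ^ b := Real.one_le_rpow (by exact_mod_cast hN) hb.le
  calc ∑ i ∈ Icc 1 N, (i : ℝ) ^ a * c i ≤ ∑ i ∈ Icc (1 : ℕ) (2 ^ m), (i : ℝ) ^ a * c i :=
        sum_le_sum_of_subset_of_nonneg (Icc_subset_Icc_right hNm)
          fun i _ _ => mul_nonneg (by positivity) (hc i)
    _ = c 1 + ∑ i ∈ Ioc (1 : ℕ) (2 ^ m * 1), (i : ℝ) ^ a * c i := by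
        rw [Icc_eq_cons_Ioc Nat.one_le_two_pow, sum_cons, mul_one, Nat.cast_one, Real.one_rpow,
          one_mul]
    _ ≤ c 1 + C * 2 ^ a * ∑ k ∈ range m, r ^ k := by
        gcongr
        simpa only [Nat.cast_one, Real.one_rpow, mul_one] using sum_Ioc_two_pow_mul_le
          (fun n hn => sum_Ioc_two_mul_weighted_le_of_tail hc ha hsum hT hn) one_pos m
    _ ≤ c 1 * (N : ℝ) ^ b + C * 2 ^ a * (r ^ m / (r - 1)) := by
        gcongr
        exact le_mul_of_one_le_right (hc 1) hNb
    _ ≤ c 1 * (N : ℝ) ^ b + C * 2 ^ a * (r * (N : ℝ) ^ b / (r - 1)) := by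
        gcongr
    _ = (c 1 + C * 2 ^ a * (r / (r - 1))) * (N : ℝ) ^ b := by ring

theorem weighted_isBigO_of_tail_isBigO (hc : ∀ i, 0 ≤ c i) (ha : 0 ≤ a) (hb : 0 < b)
    (hsum : Summable c)
    (h : (fun N : ℕ => ∑' i : ℕ, c (N + 1 + i)) =O[atTop] (fun N : ℕ => (N : ℝ) ^ (b - a))) :
    (fun N : ℕ => ∑ i ∈ Icc 1 N, (i : ℝ) ^ a * c i) =O[atTop] (fun N : ℕ => (N : ℝ) ^ b) := by
  obtain ⟨C, hC, hT⟩ := (isBigO_natCast_rpow_iff (fun N => tsum_nonneg fun i => hc _) _).1 h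
  have hr1 : 1 < (2 : ℝ) ^ b := Real.one_lt_rpow one_lt_two hb
  have hK : 0 ≤ c 1 + C * 2 ^ a * (2 ^ b / (2 ^ b - 1)) :=
    add_nonneg (hc 1) (mul_nonneg (by positivity) (div_nonneg (by positivity) (by linarith)))
  exact (isBigO_natCast_rpow_iff
    (fun N => sum_nonneg fun i _ => mul_nonneg (by positivity) (hc i)) b).2
    ⟨_, hK, fun N hN => weighted_sum_le_of_tail hc ha hb hsum hC hT hN⟩

end Tauberian

/-- **Duren's Tauberian lemma.** For a nonnegative sequence `c` and `0 < b < a`,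
the weighted partial sums `∑_{i=1}^N i^a c_i` are `O(N^b)` as `N → ∞` if and only if
the tail sums `∑_{i=N+1}^∞ c_i` are (well defined and) `O(N^{b-a})` as `N → ∞`. -/
theorem duren_lemma (c : ℕ → ℝ) (hc : ∀ i, 0 ≤ c i) (a b : ℝ) (hb : 0 < b) (hba : b < a) :
    (fun N : ℕ => ∑ i ∈ Finset.Icc 1 N, (i : ℝ) ^ a * c i) =O[atTop]
      (fun N : ℕ => (N : ℝ) ^ b) ↔
    (Summable c ∧
      (fun N : ℕ => ∑' i : ℕ, c (N + 1 + i)) =O[atTop] (fun N : ℕ => (N : ℝ) ^ (b - a))) :=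
  have ha : 0 ≤ a := hb.le.trans hba.le
  ⟨tail_isBigO_of_weighted_isBigO hc ha hba,
    fun ⟨hsum, h⟩ => weighted_isBigO_of_tail_isBigO hc ha hb hsum h⟩
end

section
/- Let $\nu \in \mathbb{R}$, let $c_k \geq 0$, and let $0 < b < a$. Then $\sum_{k=1}^{N} k^a c_k = \mathcal{O}(N^b (\log N)^{\nu})$ as $N \to \infty$ if and only if $\sum_{k=N}^{\infty} c_k = \mathcal{O}(N^{b-a} (\log N)^{\nu})$ as $N \to \infty$. -/
/-!
Write `w_s(x) = x ^ s * (log x) ^ ν`. Since `log y ≤ (1 + 1/δ) (y/x)^δ log x` for `e ≤ x ≤ y`, the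
factor `(log x) ^ ν` moves by at most a constant times `(y / x) ^ ε` between `x` and `y`, for any
`ε > 0`. Hence the weighted sums `∑ k ^ (s - 1) (log k) ^ ν` behave like pure power sums: over
`k ≥ N` they are `O(w_s(N))` if `s < 0`, over `k ≤ N` they are `O(w_s(N))` if `s > 0`.

Both implications are summation by parts, with the increments of `k ^ a` and `k ^ (-a)` controlled
by Bernoulli's inequality. If `S_k = ∑_{j ≤ k} j ^ a c_j = O(w_b(k))`, then
`∑_{k=N}^M c_k = ∑_{k=N}^M k ^ (-a) (S_k - S_{k-1})` is at most
`∑_{k=N}^M (k ^ (-a) - (k+1) ^ (-a)) S_k + (M+1) ^ (-a) S_M = O(w_{b-a}(N))` uniformly in `M`.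
Conversely, with the tails `T_k = ∑_{i ≥ k} c_i` we have `c_k = T_k - T_{k+1}`, and
`∑_{k ≤ N} k ^ a c_k ≤ ∑_{k ≤ N} (k ^ a - (k-1) ^ a) T_k = O(1) + O(w_b(N))`.
-/

open Filter Asymptotics Finset Real

section Bernoulli

variable {q t : ℝ}

theorem min_one_mul_le_one_sub_rpow (hq : 0 < q) (ht₀ : 0 ≤ t) (ht₁ : t ≤ 1) :
    min 1 q * (1 - t) ≤ 1 - t ^ q := by
  rcases le_total q 1 with hq₁ | hq₁
  · have := rpow_one_add_le_one_add_mul_self (s := t - 1) (by linarith) hq.le hq₁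
    rw [add_sub_cancel] at this
    rw [min_eq_right hq₁]
    linarith
  · rcases ht₀.eq_or_lt with rfl | ht₀
    · simp [zero_rpow hq.ne']
    · have := rpow_le_rpow_of_exponent_ge ht₀ ht₁ hq₁
      rw [rpow_one] at this
      rw [min_eq_left hq₁]
      linarith

theorem one_sub_rpow_le_max_one_mul (hq : 0 < q) (ht₀ : 0 ≤ t) (ht₁ : t ≤ 1) :
    1 - t ^ q ≤ max 1 q * (1 - t) := by
  rcases le_total q 1 with hq₁ | hq₁
  · rcases ht₀.eq_or_lt with rfl | ht₀
    · simp [zero_rpow hq.ne']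
    · have := rpow_le_rpow_of_exponent_ge ht₀ ht₁ hq₁
      rw [rpow_one] at this
      rw [max_eq_left hq₁]
      linarith
  · have := one_add_mul_self_le_rpow_one_add (s := t - 1) (by linarith) hq₁
    rw [add_sub_cancel] at this
    rw [max_eq_right hq₁]
    linarith

end Bernoulli

section Increments

variable {q x y : ℝ}

theorem rpow_sub_rpow_eq_mul (hx : 0 < x) (hy : 0 ≤ y) :
    x ^ q - y ^ q = x ^ q * (1 - (y / x) ^ q) := by
  rw [div_rpow hy hx.le, mul_sub, mul_div_cancel₀ _ (rpow_pos_of_pos hx q).ne', mul_one]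

theorem rpow_mul_one_sub_div (hx : 0 < x) : x ^ q * (1 - y / x) = (x - y) * x ^ (q - 1) := by
  rw [rpow_sub_one hx.ne']
  field_simp

theorem rpow_sub_rpow_le (hq : 0 < q) (hx : 0 < x) (hy : 0 ≤ y) (hyx : y ≤ x) :
    x ^ q - y ^ q ≤ max 1 q * ((x - y) * x ^ (q - 1)) := by
  rw [rpow_sub_rpow_eq_mul hx hy, ← rpow_mul_one_sub_div hx, mul_left_comm]
  gcongr
  exact one_sub_rpow_le_max_one_mul hq (div_nonneg hy hx.le) ((div_le_one hx).2 hyx)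

theorem min_one_mul_le_rpow_sub_rpow (hq : 0 < q) (hx : 0 < x) (hy : 0 ≤ y) (hyx : y ≤ x) :
    min 1 q * ((x - y) * x ^ (q - 1)) ≤ x ^ q - y ^ q := by
  rw [rpow_sub_rpow_eq_mul hx hy, ← rpow_mul_one_sub_div hx, mul_left_comm]
  gcongr
  exact min_one_mul_le_one_sub_rpow hq (div_nonneg hy hx.le) ((div_le_one hx).2 hyx)

theorem rpow_neg_sub_rpow_neg_add_one_eq (hx : 0 < x) :
    x ^ (-q) - (x + 1) ^ (-q) =
      ((x + 1) ^ q - x ^ q) / (x + 1) ^ (q - 1) * (x ^ (-q) / (x + 1)) := by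
  have hx₁ : 0 < x + 1 := by linarith
  rw [rpow_neg hx.le, rpow_neg hx₁.le, rpow_sub_one hx₁.ne']
  field_simp [(rpow_pos_of_pos hx q).ne', (rpow_pos_of_pos hx₁ q).ne']

theorem rpow_neg_sub_rpow_neg_add_one_le (hq : 0 < q) (hx : 0 < x) :
    x ^ (-q) - (x + 1) ^ (-q) ≤ max 1 q * x ^ (-q - 1) := by
  have hx₁ : 0 < x + 1 := by linarith
  have hinc : ((x + 1) ^ q - x ^ q) / (x + 1) ^ (q - 1) ≤ max 1 q := by
    rw [div_le_iff₀ (rpow_pos_of_pos hx₁ _)]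
    simpa using rpow_sub_rpow_le hq hx₁ hx.le (by linarith)
  calc x ^ (-q) - (x + 1) ^ (-q)
      = ((x + 1) ^ q - x ^ q) / (x + 1) ^ (q - 1) * (x ^ (-q) / (x + 1)) :=
        rpow_neg_sub_rpow_neg_add_one_eq hx
    _ ≤ max 1 q * (x ^ (-q) / x) := by gcongr; linarith
    _ = max 1 q * x ^ (-q - 1) := by rw [rpow_sub_one hx.ne']

theorem min_one_mul_le_rpow_neg_sub_rpow_neg_add_one (hq : 0 < q) (hx : 1 ≤ x) :
    min 1 q / 2 * x ^ (-q - 1) ≤ x ^ (-q) - (x + 1) ^ (-q) := by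
  have hx₀ : 0 < x := by linarith
  have hx₁ : 0 < x + 1 := by linarith
  have hinc : min 1 q ≤ ((x + 1) ^ q - x ^ q) / (x + 1) ^ (q - 1) := by
    rw [le_div_iff₀ (rpow_pos_of_pos hx₁ _)]
    simpa using min_one_mul_le_rpow_sub_rpow hq hx₁ hx₀.le (by linarith)
  calc min 1 q / 2 * x ^ (-q - 1) = min 1 q * (x ^ (-q) / (2 * x)) := by
        rw [rpow_sub_one hx₀.ne']; ring
    _ ≤ ((x + 1) ^ q - x ^ q) / (x + 1) ^ (q - 1) * (x ^ (-q) / (x + 1)) := by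
        exact mul_le_mul hinc (by gcongr; linarith) (by positivity)
          ((lt_min one_pos hq).le.trans hinc)
    _ = x ^ (-q) - (x + 1) ^ (-q) := (rpow_neg_sub_rpow_neg_add_one_eq hx₀).symm

end Increments

theorem sum_Icc_rpow_neg_sub_one_le {p : ℝ} (hp : 0 < p) {N : ℕ} (hN : 1 ≤ N) (M : ℕ) :
    ∑ k ∈ Icc N M, (k : ℝ) ^ (-p - 1) ≤ 2 / min 1 p * (N : ℝ) ^ (-p) := by
  have hm : 0 < min 1 p := lt_min one_pos hp
  rcases lt_or_ge M N with hMN | hNM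
  · rw [Icc_eq_empty_of_lt hMN, sum_empty]
    positivity
  have htel := sum_Icc_sub hNM fun k : ℕ => -(k : ℝ) ^ (-p)
  simp only [neg_sub_neg] at htel
  calc ∑ k ∈ Icc N M, (k : ℝ) ^ (-p - 1)
      ≤ ∑ k ∈ Icc N M, 2 / min 1 p * ((k : ℝ) ^ (-p) - ((k + 1 : ℕ) : ℝ) ^ (-p)) := by
        refine sum_le_sum fun k hk => ?_
        have hk : (1 : ℝ) ≤ k := by exact_mod_cast hN.trans (mem_Icc.1 hk).1
        have := min_one_mul_le_rpow_neg_sub_rpow_neg_add_one hp hk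
        rw [div_mul_eq_mul_div, le_div_iff₀ hm]
        push_cast
        linarith
    _ = 2 / min 1 p * ((N : ℝ) ^ (-p) - ((M + 1 : ℕ) : ℝ) ^ (-p)) := by rw [← mul_sum, htel]
    _ ≤ 2 / min 1 p * (N : ℝ) ^ (-p) := by
        gcongr
        exact sub_le_self _ (by positivity)

theorem sum_Icc_rpow_sub_one_le {q : ℝ} (hq : 0 < q) (N : ℕ) :
    ∑ k ∈ Icc 1 N, (k : ℝ) ^ (q - 1) ≤ (N : ℝ) ^ q / min 1 q := by
  have hm : 0 < min 1 q := lt_min one_pos hq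
  induction N with
  | zero => simp [zero_rpow hq.ne']
  | succ n ih =>
    have hinc := min_one_mul_le_rpow_sub_rpow hq (x := n + 1) (y := n) (by positivity)
      (by positivity) (by linarith)
    rw [add_sub_cancel_left, one_mul] at hinc
    rw [le_div_iff₀ hm] at ih ⊢
    rw [sum_Icc_succ_top (by omega), Nat.cast_succ, add_mul]
    linarith

section LogPowers

variable {x y : ℝ}

theorem one_le_log_of_exp_one_le (hx : exp 1 ≤ x) : 1 ≤ log x := by
  rwa [le_log_iff_exp_le (by linarith [exp_pos 1])]

theorem exp_one_le_natCast {k : ℕ} (hk : 3 ≤ k) : exp 1 ≤ k := by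
  have : (3 : ℝ) ≤ k := by exact_mod_cast hk
  linarith [exp_one_lt_d9]

theorem log_le_mul_rpow_div_mul_log {δ : ℝ} (hδ : 0 < δ) (hx : exp 1 ≤ x) (hxy : x ≤ y) :
    log y ≤ (1 + 1 / δ) * (y / x) ^ δ * log x := by
  have hx₀ : 0 < x := (exp_pos 1).trans_le hx
  have hlog := one_le_log_of_exp_one_le hx
  have hr : 1 ≤ (y / x) ^ δ := one_le_rpow ((one_le_div hx₀).2 hxy) hδ.le
  have hlog_div : log (y / x) ≤ (y / x) ^ δ / δ :=
    log_le_rpow_div (div_nonneg (hx₀.le.trans hxy) hx₀.le) hδ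
  rw [log_div (hx₀.trans_le hxy).ne' hx₀.ne'] at hlog_div
  have h₁ : log x ≤ (y / x) ^ δ * log x := le_mul_of_one_le_left (by linarith) hr
  have h₂ : (y / x) ^ δ / δ ≤ (y / x) ^ δ / δ * log x := le_mul_of_one_le_right (by positivity) hlog
  calc log y ≤ (y / x) ^ δ * log x + (y / x) ^ δ / δ * log x := by linarith
    _ = (1 + 1 / δ) * (y / x) ^ δ * log x := by ring

theorem exists_log_rpow_le_mul_div_rpow (ν : ℝ) {ε : ℝ} (hε : 0 < ε) :
    ∃ C, 0 < C ∧ ∀ x y : ℝ, exp 1 ≤ x → x ≤ y → log y ^ ν ≤ C * (y / x) ^ ε * log x ^ ν := by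
  rcases le_or_gt ν 0 with hν | hν
  · refine ⟨1, one_pos, fun x y hx hxy => ?_⟩
    have hlog := one_le_log_of_exp_one_le hx
    have hx₀ : 0 < x := (exp_pos 1).trans_le hx
    calc log y ^ ν ≤ log x ^ ν :=
          rpow_le_rpow_of_nonpos (by linarith) (log_le_log hx₀ hxy) hν
      _ ≤ 1 * (y / x) ^ ε * log x ^ ν := by
          rw [one_mul]
          exact le_mul_of_one_le_left (by positivity)
            (one_le_rpow ((one_le_div hx₀).2 hxy) hε.le)
  · set δ := ε / ν
    have hδ : 0 < δ := by positivity
    refine ⟨(1 + 1 / δ) ^ ν, by positivity, fun x y hx hxy => ?_⟩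
    have hx₀ : 0 < x := (exp_pos 1).trans_le hx
    have hy₀ : 0 < y := hx₀.trans_le hxy
    have hlog := one_le_log_of_exp_one_le hx
    calc log y ^ ν ≤ ((1 + 1 / δ) * (y / x) ^ δ * log x) ^ ν :=
          rpow_le_rpow (by linarith [log_le_log hx₀ hxy]) (log_le_mul_rpow_div_mul_log hδ hx hxy)
            hν.le
      _ = (1 + 1 / δ) ^ ν * (y / x) ^ (δ * ν) * log x ^ ν := by
          rw [mul_rpow (by positivity) (by linarith), mul_rpow (by positivity) (by positivity),
            ← rpow_mul (by positivity)]
      _ = (1 + 1 / δ) ^ ν * (y / x) ^ ε * log x ^ ν := by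
          rw [div_mul_cancel₀ _ hν.ne']

theorem exists_log_rpow_le_mul_div_rpow' (ν : ℝ) {ε : ℝ} (hε : 0 < ε) :
    ∃ C, 0 < C ∧ ∀ x y : ℝ, exp 1 ≤ x → x ≤ y → log x ^ ν ≤ C * (y / x) ^ ε * log y ^ ν := by
  obtain ⟨C, hC, hle⟩ := exists_log_rpow_le_mul_div_rpow (-ν) hε
  refine ⟨C, hC, fun x y hx hxy => ?_⟩
  have hlogx := one_le_log_of_exp_one_le hx
  have hlogy := one_le_log_of_exp_one_le (hx.trans hxy)
  have hA : 0 < log x ^ ν := rpow_pos_of_pos (by linarith) ν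
  have hB : 0 < log y ^ ν := rpow_pos_of_pos (by linarith) ν
  have h := hle x y hx hxy
  rw [rpow_neg (by linarith), rpow_neg (by linarith)] at h
  calc log x ^ ν = log x ^ ν * log y ^ ν * (log y ^ ν)⁻¹ := by field_simp
    _ ≤ log x ^ ν * log y ^ ν * (C * (y / x) ^ ε * (log x ^ ν)⁻¹) := by gcongr
    _ = C * (y / x) ^ ε * log y ^ ν := by field_simp

theorem eventually_one_le_rpow_mul_log_rpow (ν : ℝ) {b : ℝ} (hb : 0 < b) :
    ∀ᶠ N : ℕ in atTop, 1 ≤ (N : ℝ) ^ b * log N ^ ν := by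
  have h := tendsto_natCast_atTop_atTop.eventually
    ((isLittleO_log_rpow_rpow_atTop (-ν) hb).bound one_pos)
  filter_upwards [h, eventually_ge_atTop 3] with N hN hN₃
  have hlog : 0 < log N := log_pos (by exact_mod_cast (show 1 < N by omega))
  rw [one_mul, norm_of_nonneg (rpow_nonneg hlog.le _), norm_of_nonneg (by positivity),
    rpow_neg hlog.le, inv_le_iff_one_le_mul₀ (rpow_pos_of_pos hlog _)] at hN
  linarith

end LogPowers

section WeightedSums

variable (ν : ℝ) {s : ℝ}

theorem div_rpow_eq_rpow_mul_rpow_neg {x y ε : ℝ} (hx : 0 ≤ x) (hy : 0 ≤ y) :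
    (y / x) ^ ε = y ^ ε * x ^ (-ε) := by
  rw [div_rpow hy hx, rpow_neg hx, div_eq_mul_inv]

theorem exists_rpow_mul_log_rpow_le_of_neg (hs : s < 0) :
    ∃ K, 0 ≤ K ∧ ∀ x y : ℝ, exp 1 ≤ x → x ≤ y → y ^ s * log y ^ ν ≤ K * (x ^ s * log x ^ ν) := by
  obtain ⟨ε, hε, rfl⟩ : ∃ ε, 0 < ε ∧ s = -(2 * ε) := ⟨-s / 2, by linarith, by ring⟩
  obtain ⟨C, hC, hlog⟩ := exists_log_rpow_le_mul_div_rpow ν hε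
  refine ⟨C, hC.le, fun x y hx hxy => ?_⟩
  have hx₀ : 0 < x := (exp_pos 1).trans_le hx
  have hy₀ : 0 < y := hx₀.trans_le hxy
  have hlogx : 0 ≤ log x ^ ν := rpow_nonneg (log_nonneg (by linarith [add_one_le_exp 1])) ν
  calc y ^ (-(2 * ε)) * log y ^ ν ≤ y ^ (-(2 * ε)) * (C * (y / x) ^ ε * log x ^ ν) := by
        gcongr; exact hlog x y hx hxy
    _ = C * log x ^ ν * x ^ (-ε) * y ^ (-ε) := by
        have hy : y ^ (-(2 * ε)) * y ^ ε = y ^ (-ε) := by rw [← rpow_add hy₀]; ring_nf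
        rw [div_rpow_eq_rpow_mul_rpow_neg hx₀.le hy₀.le]
        linear_combination C * log x ^ ν * x ^ (-ε) * hy
    _ ≤ C * log x ^ ν * x ^ (-ε) * x ^ (-ε) :=
        mul_le_mul_of_nonneg_left (rpow_le_rpow_of_nonpos hx₀ hxy (by linarith)) (by positivity)
    _ = C * (x ^ (-(2 * ε)) * log x ^ ν) := by
        rw [mul_assoc _ (x ^ (-ε)), ← rpow_add hx₀]; ring_nf

theorem exists_sum_Icc_rpow_mul_log_rpow_le_of_neg (hs : s < 0) :
    ∃ K, 0 ≤ K ∧ ∀ N M : ℕ, 3 ≤ N →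
      ∑ k ∈ Icc N M, (k : ℝ) ^ (s - 1) * log k ^ ν ≤ K * ((N : ℝ) ^ s * log N ^ ν) := by
  obtain ⟨ε, hε, rfl⟩ : ∃ ε, 0 < ε ∧ s = -(2 * ε) := ⟨-s / 2, by linarith, by ring⟩
  obtain ⟨C, hC, hlog⟩ := exists_log_rpow_le_mul_div_rpow ν hε
  refine ⟨C * (2 / min 1 ε), by positivity, fun N M hN => ?_⟩
  have hN₀ : (0 : ℝ) < N := by exact_mod_cast (show 0 < N by omega)
  have hterm : ∀ k ∈ Icc N M, (k : ℝ) ^ (-(2 * ε) - 1) * log k ^ ν ≤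
      C * log N ^ ν * (N : ℝ) ^ (-ε) * (k : ℝ) ^ (-ε - 1) := by
    intro k hk
    have hNk : (N : ℝ) ≤ k := by exact_mod_cast (mem_Icc.1 hk).1
    have hk₀ : (0 : ℝ) < k := hN₀.trans_le hNk
    have hk : (k : ℝ) ^ (-(2 * ε) - 1) * (k : ℝ) ^ ε = (k : ℝ) ^ (-ε - 1) := by
      rw [← rpow_add hk₀]; ring_nf
    calc (k : ℝ) ^ (-(2 * ε) - 1) * log k ^ ν
        ≤ (k : ℝ) ^ (-(2 * ε) - 1) * (C * (k / N) ^ ε * log N ^ ν) := by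
          gcongr; exact hlog N k (exp_one_le_natCast hN) hNk
      _ = C * log N ^ ν * (N : ℝ) ^ (-ε) * (k : ℝ) ^ (-ε - 1) := by
          rw [div_rpow_eq_rpow_mul_rpow_neg hN₀.le hk₀.le]
          linear_combination C * log N ^ ν * (N : ℝ) ^ (-ε) * hk
  have hN : (N : ℝ) ^ (-ε) * (N : ℝ) ^ (-ε) = (N : ℝ) ^ (-(2 * ε)) := by
    rw [← rpow_add hN₀]; ring_nf
  calc ∑ k ∈ Icc N M, (k : ℝ) ^ (-(2 * ε) - 1) * log k ^ ν
      ≤ ∑ k ∈ Icc N M, C * log N ^ ν * (N : ℝ) ^ (-ε) * (k : ℝ) ^ (-ε - 1) := sum_le_sum hterm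
    _ = C * log N ^ ν * (N : ℝ) ^ (-ε) * ∑ k ∈ Icc N M, (k : ℝ) ^ (-ε - 1) := by rw [mul_sum]
    _ ≤ C * log N ^ ν * (N : ℝ) ^ (-ε) * (2 / min 1 ε * (N : ℝ) ^ (-ε)) := by
        gcongr; exact sum_Icc_rpow_neg_sub_one_le hε (by omega) M
    _ = C * (2 / min 1 ε) * ((N : ℝ) ^ (-(2 * ε)) * log N ^ ν) := by
        linear_combination C * (2 / min 1 ε) * log N ^ ν * hN

theorem exists_sum_Icc_rpow_mul_log_rpow_le_of_pos (hs : 0 < s) :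
    ∃ K, 0 ≤ K ∧ ∀ N : ℕ,
      ∑ k ∈ Icc 3 N, (k : ℝ) ^ (s - 1) * log k ^ ν ≤ K * ((N : ℝ) ^ s * log N ^ ν) := by
  obtain ⟨ε, hε, rfl⟩ : ∃ ε, 0 < ε ∧ s = 2 * ε := ⟨s / 2, by linarith, by ring⟩
  obtain ⟨C, hC, hlog⟩ := exists_log_rpow_le_mul_div_rpow' ν hε
  refine ⟨C / min 1 ε, by positivity, fun N => ?_⟩
  have hterm : ∀ k ∈ Icc 3 N, (k : ℝ) ^ (2 * ε - 1) * log k ^ ν ≤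
      C * log N ^ ν * (N : ℝ) ^ ε * (k : ℝ) ^ (ε - 1) := by
    intro k hk
    obtain ⟨hk₃, hkN⟩ := mem_Icc.1 hk
    have hk₀ : (0 : ℝ) < k := by exact_mod_cast (show 0 < k by omega)
    have hk : (k : ℝ) ^ (2 * ε - 1) * (k : ℝ) ^ (-ε) = (k : ℝ) ^ (ε - 1) := by
      rw [← rpow_add hk₀]; ring_nf
    calc (k : ℝ) ^ (2 * ε - 1) * log k ^ ν
        ≤ (k : ℝ) ^ (2 * ε - 1) * (C * (N / k) ^ ε * log N ^ ν) := by
          gcongr; exact hlog k N (exp_one_le_natCast hk₃) (by exact_mod_cast hkN)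
      _ = C * log N ^ ν * (N : ℝ) ^ ε * (k : ℝ) ^ (ε - 1) := by
          rw [div_rpow_eq_rpow_mul_rpow_neg hk₀.le (Nat.cast_nonneg N)]
          linear_combination C * log N ^ ν * (N : ℝ) ^ ε * hk
  have hN : (N : ℝ) ^ ε * (N : ℝ) ^ ε = (N : ℝ) ^ (2 * ε) := by
    rw [← rpow_add' (Nat.cast_nonneg N) (by linarith)]; ring_nf
  calc ∑ k ∈ Icc 3 N, (k : ℝ) ^ (2 * ε - 1) * log k ^ ν
      ≤ ∑ k ∈ Icc 3 N, C * log N ^ ν * (N : ℝ) ^ ε * (k : ℝ) ^ (ε - 1) := sum_le_sum hterm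
    _ = C * log N ^ ν * (N : ℝ) ^ ε * ∑ k ∈ Icc 3 N, (k : ℝ) ^ (ε - 1) := by rw [mul_sum]
    _ ≤ C * log N ^ ν * (N : ℝ) ^ ε * ((N : ℝ) ^ ε / min 1 ε) := by
        gcongr
        calc ∑ k ∈ Icc 3 N, (k : ℝ) ^ (ε - 1) ≤ ∑ k ∈ Icc 1 N, (k : ℝ) ^ (ε - 1) :=
              sum_le_sum_of_subset_of_nonneg (Icc_subset_Icc_left (by norm_num))
                fun k _ _ => by positivity
          _ ≤ (N : ℝ) ^ ε / min 1 ε := sum_Icc_rpow_sub_one_le hε N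
    _ = C / min 1 ε * ((N : ℝ) ^ (2 * ε) * log N ^ ν) := by
        linear_combination C / min 1 ε * log N ^ ν * hN

end WeightedSums

theorem isBigO_iff_exists_eventually_le {α : Type*} {l : Filter α} {f g : α → ℝ}
    (hf : ∀ x, 0 ≤ f x) (hg : ∀ x, 0 ≤ g x) :
    f =O[l] g ↔ ∃ C, 0 ≤ C ∧ ∀ᶠ x in l, f x ≤ C * g x := by
  have hnorm : ∀ C x, ‖f x‖ ≤ C * ‖g x‖ ↔ f x ≤ C * g x := fun C x => by
    rw [norm_of_nonneg (hf x), norm_of_nonneg (hg x)]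
  constructor
  · intro h
    obtain ⟨C, hC, hle⟩ := isBigO_iff'.1 h
    exact ⟨C, hC.le, hle.mono fun x => (hnorm C x).1⟩
  · rintro ⟨C, -, hle⟩
    exact IsBigO.of_bound C (hle.mono fun x => (hnorm C x).2)

theorem summable_and_eventually_tsum_le {c : ℕ → ℝ} (hc : ∀ k, 0 ≤ c k) {B : ℕ → ℝ}
    (h : ∀ᶠ N in atTop, ∀ M, ∑ k ∈ Icc N M, c k ≤ B N) :
    Summable c ∧ ∀ᶠ N in atTop, ∑' i, c (N + i) ≤ B N := by
  have hrange : ∀ N, (∀ M, ∑ k ∈ Icc N M, c k ≤ B N) → ∀ n, ∑ i ∈ range n, c (N + i) ≤ B N := by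
    intro N hN n
    calc ∑ i ∈ range n, c (N + i) = ∑ k ∈ Ico N (N + n), c k := by
          rw [sum_Ico_eq_sum_range, add_tsub_cancel_left]
      _ ≤ ∑ k ∈ Icc N (N + n), c k :=
          sum_le_sum_of_subset_of_nonneg Ico_subset_Icc_self fun k _ _ => hc k
      _ ≤ B N := hN _
  obtain ⟨N₀, hN₀⟩ := eventually_atTop.1 h
  refine ⟨(summable_nat_add_iff N₀).1 ?_,
    h.mono fun N hN => tsum_le_of_sum_range_le (fun i => hc _) (hrange N hN)⟩
  exact summable_of_sum_range_le (fun i => hc _) fun n => by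
    simpa only [add_comm] using hrange N₀ (hN₀ N₀ le_rfl) n

theorem sum_Icc_mul_le_by_parts {f d : ℕ → ℝ} (hf : ∀ k, 0 ≤ f k) (hd : ∀ k, 0 ≤ d k)
    {N M : ℕ} (hN : 1 ≤ N) (hNM : N ≤ M) :
    ∑ k ∈ Icc N M, f k * d k ≤
      ∑ k ∈ Icc N M, (f k - f (k + 1)) * ∑ j ∈ Icc 1 k, d j + f (M + 1) * ∑ j ∈ Icc 1 M, d j := by
  induction M, hNM using Nat.le_induction with
  | base =>
    have : d N ≤ ∑ j ∈ Icc 1 N, d j :=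
      single_le_sum (fun j _ => hd j) (mem_Icc.2 ⟨hN, le_rfl⟩)
    simp only [Icc_self, sum_singleton]
    nlinarith [hf N]
  | succ M hNM ih =>
    rw [sum_Icc_succ_top (by omega), sum_Icc_succ_top (by omega), sum_Icc_succ_top (by omega)]
    linarith

theorem sum_Icc_one_mul_sub_by_parts (g T : ℕ → ℝ) (hg : g 0 = 0) (N : ℕ) :
    ∑ k ∈ Icc 1 N, g k * (T k - T (k + 1)) =
      ∑ k ∈ Icc 1 N, (g k - g (k - 1)) * T k - g N * T (N + 1) := by
  induction N with
  | zero => simp [hg]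
  | succ N ih =>
    rw [sum_Icc_succ_top (by omega), sum_Icc_succ_top (by omega), ih, Nat.add_sub_cancel]
    ring

section Duren

variable {ν a b C : ℝ}

theorem rpow_neg_sub_mul_le {x S : ℝ} (ha : 0 < a) (hx : 0 < x) (hS₀ : 0 ≤ S)
    (hS : S ≤ C * (x ^ b * log x ^ ν)) :
    (x ^ (-a) - (x + 1) ^ (-a)) * S ≤ max 1 a * C * (x ^ (b - a - 1) * log x ^ ν) := by
  have hpow : x ^ (-a - 1) * x ^ b = x ^ (b - a - 1) := by rw [← rpow_add hx]; ring_nf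
  calc (x ^ (-a) - (x + 1) ^ (-a)) * S ≤ max 1 a * x ^ (-a - 1) * (C * (x ^ b * log x ^ ν)) :=
        mul_le_mul (rpow_neg_sub_rpow_neg_add_one_le ha hx) hS hS₀ (by positivity)
    _ = max 1 a * C * (x ^ (b - a - 1) * log x ^ ν) := by
        linear_combination max 1 a * C * log x ^ ν * hpow

theorem rpow_neg_mul_le {x y S : ℝ} (ha : 0 < a) (hx : 0 < x) (hxy : x ≤ y) (hS₀ : 0 ≤ S)
    (hS : S ≤ C * (x ^ b * log x ^ ν)) :
    y ^ (-a) * S ≤ C * (x ^ (b - a) * log x ^ ν) := by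
  have hpow : x ^ (-a) * x ^ b = x ^ (b - a) := by rw [← rpow_add hx]; ring_nf
  calc y ^ (-a) * S ≤ x ^ (-a) * (C * (x ^ b * log x ^ ν)) :=
        mul_le_mul (rpow_le_rpow_of_nonpos hx hxy (by linarith)) hS hS₀ (by positivity)
    _ = C * (x ^ (b - a) * log x ^ ν) := by linear_combination C * log x ^ ν * hpow

theorem rpow_sub_rpow_sub_one_mul_le {x T : ℝ} (ha : 0 < a) (hx : 1 ≤ x) (hT₀ : 0 ≤ T)
    (hT : T ≤ C * (x ^ (b - a) * log x ^ ν)) :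
    (x ^ a - (x - 1) ^ a) * T ≤ max 1 a * C * (x ^ (b - 1) * log x ^ ν) := by
  have hx₀ : 0 < x := by linarith
  have hpow : x ^ (a - 1) * x ^ (b - a) = x ^ (b - 1) := by rw [← rpow_add hx₀]; ring_nf
  have hinc := rpow_sub_rpow_le ha hx₀ (y := x - 1) (by linarith) (by linarith)
  rw [sub_sub_cancel, one_mul] at hinc
  calc (x ^ a - (x - 1) ^ a) * T ≤ max 1 a * x ^ (a - 1) * (C * (x ^ (b - a) * log x ^ ν)) :=
        mul_le_mul hinc hT hT₀ (by positivity)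
    _ = max 1 a * C * (x ^ (b - 1) * log x ^ ν) := by
        linear_combination max 1 a * C * log x ^ ν * hpow

variable {c : ℕ → ℝ}

theorem sum_Icc_le_sum_rpow_neg_sub_mul_add (hc : ∀ k, 0 ≤ c k) {N M : ℕ} (hN : 1 ≤ N)
    (hNM : N ≤ M) :
    ∑ k ∈ Icc N M, c k ≤
      ∑ k ∈ Icc N M, ((k : ℝ) ^ (-a) - ((k : ℝ) + 1) ^ (-a)) * ∑ j ∈ Icc 1 k, (j : ℝ) ^ a * c j
        + ((M : ℝ) + 1) ^ (-a) * ∑ j ∈ Icc 1 M, (j : ℝ) ^ a * c j := by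
  calc ∑ k ∈ Icc N M, c k = ∑ k ∈ Icc N M, (k : ℝ) ^ (-a) * ((k : ℝ) ^ a * c k) := by
        refine sum_congr rfl fun k hk => ?_
        have hk₀ : (0 : ℝ) < k := by exact_mod_cast hN.trans (mem_Icc.1 hk).1
        rw [rpow_neg hk₀.le, inv_mul_cancel_left₀ (rpow_pos_of_pos hk₀ a).ne']
    _ ≤ _ := by
        simpa only [Nat.cast_succ] using sum_Icc_mul_le_by_parts (f := fun k : ℕ => (k : ℝ) ^ (-a))
          (fun k => by positivity) (fun k => mul_nonneg (by positivity) (hc k)) hN hNM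

theorem sum_Icc_rpow_mul_le_sum_rpow_sub_mul_tsum (hc : ∀ k, 0 ≤ c k) (hsum : Summable c)
    (ha : 0 < a) (N : ℕ) :
    ∑ k ∈ Icc 1 N, (k : ℝ) ^ a * c k ≤
      ∑ k ∈ Icc 1 N, ((k : ℝ) ^ a - ((k : ℝ) - 1) ^ a) * ∑' i, c (k + i) := by
  set T : ℕ → ℝ := fun k => ∑' i, c (k + i)
  have hcT : ∀ k, c k = T k - T (k + 1) := by
    intro k
    have hk : Summable fun i => c (k + i) := by
      simpa only [add_comm] using (summable_nat_add_iff k).2 hsum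
    simp only [T, hk.tsum_eq_zero_add, add_zero, add_assoc, add_comm 1, add_sub_cancel_right]
  set g : ℕ → ℝ := fun k => (k : ℝ) ^ a
  calc ∑ k ∈ Icc 1 N, (k : ℝ) ^ a * c k = ∑ k ∈ Icc 1 N, g k * (T k - T (k + 1)) :=
        sum_congr rfl fun k _ => by rw [hcT k]
    _ = ∑ k ∈ Icc 1 N, (g k - g (k - 1)) * T k - g N * T (N + 1) :=
        sum_Icc_one_mul_sub_by_parts g T (by simp [g, zero_rpow ha.ne']) N
    _ ≤ ∑ k ∈ Icc 1 N, (g k - g (k - 1)) * T k :=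
        sub_le_self _ (mul_nonneg (by positivity) (tsum_nonneg fun i => hc _))
    _ = ∑ k ∈ Icc 1 N, ((k : ℝ) ^ a - ((k : ℝ) - 1) ^ a) * T k :=
        sum_congr rfl fun k hk => by
          simp only [g, Nat.cast_pred (show 0 < k by have := (mem_Icc.1 hk).1; omega)]

theorem eventually_sum_Icc_le_of_sum_Icc_rpow_mul_le (hc : ∀ k, 0 ≤ c k) (ha : 0 < a)
    (hba : b < a) (hC : 0 ≤ C)
    (hS : ∀ᶠ k : ℕ in atTop, ∑ j ∈ Icc 1 k, (j : ℝ) ^ a * c j ≤ C * ((k : ℝ) ^ b * log k ^ ν)) :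
    ∃ K, 0 ≤ K ∧ ∀ᶠ N : ℕ in atTop, ∀ M,
      ∑ k ∈ Icc N M, c k ≤ K * ((N : ℝ) ^ (b - a) * log N ^ ν) := by
  obtain ⟨K₁, hK₁, hsum⟩ := exists_sum_Icc_rpow_mul_log_rpow_le_of_neg ν (sub_neg.2 hba)
  obtain ⟨K₂, hK₂, hmono⟩ := exists_rpow_mul_log_rpow_le_of_neg ν (sub_neg.2 hba)
  obtain ⟨N₀, hN₀⟩ := eventually_atTop.1 hS
  refine ⟨max 1 a * C * K₁ + C * K₂, by positivity, ?_⟩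
  filter_upwards [eventually_ge_atTop (max N₀ 3)] with N hN M
  have hN₃ : 3 ≤ N := le_of_max_le_right hN
  rcases lt_or_ge M N with hMN | hNM
  · rw [Icc_eq_empty_of_lt hMN, sum_empty]
    positivity
  have hS₀ : ∀ k : ℕ, 0 ≤ ∑ j ∈ Icc 1 k, (j : ℝ) ^ a * c j :=
    fun k => sum_nonneg fun j _ => mul_nonneg (by positivity) (hc j)
  have hpos : ∀ {k}, N ≤ k → (0 : ℝ) < k := fun hk => by exact_mod_cast (show 0 < _ by omega)
  have hSk : ∀ {k}, N ≤ k → ∑ j ∈ Icc 1 k, (j : ℝ) ^ a * c j ≤ C * ((k : ℝ) ^ b * log k ^ ν) :=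
    fun hk => hN₀ _ ((le_of_max_le_left hN).trans hk)
  calc ∑ k ∈ Icc N M, c k
      ≤ ∑ k ∈ Icc N M, ((k : ℝ) ^ (-a) - ((k : ℝ) + 1) ^ (-a)) * ∑ j ∈ Icc 1 k, (j : ℝ) ^ a * c j
        + ((M : ℝ) + 1) ^ (-a) * ∑ j ∈ Icc 1 M, (j : ℝ) ^ a * c j :=
        sum_Icc_le_sum_rpow_neg_sub_mul_add hc (by omega) hNM
    _ ≤ ∑ k ∈ Icc N M, max 1 a * C * ((k : ℝ) ^ (b - a - 1) * log k ^ ν)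
          + C * ((M : ℝ) ^ (b - a) * log M ^ ν) :=
        add_le_add (sum_le_sum fun k hk =>
            rpow_neg_sub_mul_le ha (hpos (mem_Icc.1 hk).1) (hS₀ k) (hSk (mem_Icc.1 hk).1))
          (rpow_neg_mul_le ha (hpos hNM) (by linarith) (hS₀ M) (hSk hNM))
    _ ≤ max 1 a * C * (K₁ * ((N : ℝ) ^ (b - a) * log N ^ ν))
          + C * (K₂ * ((N : ℝ) ^ (b - a) * log N ^ ν)) := by
        rw [← mul_sum]
        exact add_le_add (mul_le_mul_of_nonneg_left (hsum N M hN₃) (by positivity))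
          (mul_le_mul_of_nonneg_left
            (hmono N M (exp_one_le_natCast hN₃) (by exact_mod_cast hNM)) hC)
    _ = (max 1 a * C * K₁ + C * K₂) * ((N : ℝ) ^ (b - a) * log N ^ ν) := by ring

theorem eventually_sum_Icc_rpow_mul_le_of_tsum_le (hc : ∀ k, 0 ≤ c k) (hsum : Summable c)
    (ha : 0 < a) (hb : 0 < b) (hC : 0 ≤ C)
    (hT : ∀ᶠ k : ℕ in atTop, ∑' i, c (k + i) ≤ C * ((k : ℝ) ^ (b - a) * log k ^ ν)) :
    ∃ J K, 0 ≤ K ∧ ∀ᶠ N : ℕ in atTop,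
      ∑ k ∈ Icc 1 N, (k : ℝ) ^ a * c k ≤ J + K * ((N : ℝ) ^ b * log N ^ ν) := by
  set u : ℕ → ℝ := fun k => ((k : ℝ) ^ a - ((k : ℝ) - 1) ^ a) * ∑' i, c (k + i)
  obtain ⟨K₁, hK₁, hhead⟩ := exists_sum_Icc_rpow_mul_log_rpow_le_of_pos ν hb
  obtain ⟨N₀, hN₀⟩ := eventually_atTop.1 hT
  set N₂ := max N₀ 2
  refine ⟨∑ k ∈ Icc 1 N₂, u k, max 1 a * C * K₁, by positivity, ?_⟩
  filter_upwards [eventually_ge_atTop N₂] with N hN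
  have hsplit : ∑ k ∈ Icc 1 N, u k = ∑ k ∈ Icc 1 N₂, u k + ∑ k ∈ Ioc N₂ N, u k := by
    rw [← zero_add 1, Icc_add_one_left_eq_Ioc, Icc_add_one_left_eq_Ioc,
      sum_Ioc_consecutive _ (Nat.zero_le N₂) hN]
  have hterm : ∀ k ∈ Ioc N₂ N, u k ≤ max 1 a * C * ((k : ℝ) ^ (b - 1) * log k ^ ν) := by
    intro k hk
    have hk₂ := (mem_Ioc.1 hk).1
    exact rpow_sub_rpow_sub_one_mul_le ha (by exact_mod_cast (show 1 ≤ k by omega))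
      (tsum_nonneg fun i => hc _) (hN₀ k (by omega))
  have hsubset : Ioc N₂ N ⊆ Icc 3 N := fun k hk => by
    simp only [mem_Ioc, mem_Icc] at hk ⊢
    omega
  calc ∑ k ∈ Icc 1 N, (k : ℝ) ^ a * c k ≤ ∑ k ∈ Icc 1 N, u k :=
        sum_Icc_rpow_mul_le_sum_rpow_sub_mul_tsum hc hsum ha N
    _ ≤ ∑ k ∈ Icc 1 N₂, u k + max 1 a * C * ∑ k ∈ Icc 3 N, (k : ℝ) ^ (b - 1) * log k ^ ν := by
        rw [hsplit, mul_sum]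
        gcongr
        exact (sum_le_sum hterm).trans
          (sum_le_sum_of_subset_of_nonneg hsubset fun k _ _ => by positivity)
    _ ≤ ∑ k ∈ Icc 1 N₂, u k + max 1 a * C * K₁ * ((N : ℝ) ^ b * log N ^ ν) := by
        rw [mul_assoc (max 1 a * C)]
        gcongr
        exact hhead N

end Duren

/-- **Logarithmically weighted Duren lemma.** For `ν ∈ ℝ`, a nonnegative sequence `c` and
`0 < b < a`, the weighted partial sums `∑_{k=1}^N k^a c_k` are `O(N^b (log N)^ν)` as `N → ∞`
if and only if the tail sums `∑_{k=N}^∞ c_k` are (well defined and) `O(N^{b-a} (log N)^ν)`. -/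
theorem duren_lemma_log (ν : ℝ) (c : ℕ → ℝ) (hc : ∀ k, 0 ≤ c k) (a b : ℝ)
    (hb : 0 < b) (hba : b < a) :
    (fun N : ℕ => ∑ k ∈ Finset.Icc 1 N, (k : ℝ) ^ a * c k) =O[atTop]
      (fun N : ℕ => (N : ℝ) ^ b * Real.log N ^ ν) ↔
    (Summable c ∧
      (fun N : ℕ => ∑' i : ℕ, c (N + i)) =O[atTop]
        (fun N : ℕ => (N : ℝ) ^ (b - a) * Real.log N ^ ν)) := by
  have ha : 0 < a := hb.trans hba
  have hW : ∀ (s : ℝ) (N : ℕ), 0 ≤ (N : ℝ) ^ s * log N ^ ν := fun s N => by positivity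
  have hS : ∀ N : ℕ, 0 ≤ ∑ k ∈ Icc 1 N, (k : ℝ) ^ a * c k :=
    fun N => sum_nonneg fun k _ => mul_nonneg (by positivity) (hc k)
  have hT : ∀ N, 0 ≤ ∑' i, c (N + i) := fun N => tsum_nonneg fun i => hc _
  rw [isBigO_iff_exists_eventually_le hS (hW b), isBigO_iff_exists_eventually_le hT (hW _)]
  constructor
  · rintro ⟨C, hC, hpartial⟩
    obtain ⟨K, hK, htail⟩ := eventually_sum_Icc_le_of_sum_Icc_rpow_mul_le hc ha hba hC hpartial
    obtain ⟨hsum, htsum⟩ := summable_and_eventually_tsum_le hc htail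
    exact ⟨hsum, K, hK, htsum⟩
  · rintro ⟨hsum, C, hC, htail⟩
    obtain ⟨J, K, hK, hpartial⟩ := eventually_sum_Icc_rpow_mul_le_of_tsum_le hc hsum ha hb hC htail
    refine ⟨|J| + K, by positivity, ?_⟩
    filter_upwards [hpartial, eventually_one_le_rpow_mul_log_rpow ν hb] with N hN hW₁
    nlinarith [le_abs_self J, abs_nonneg J]
end

section
/- Let $G$ be a compact Vilenkin group and $\sigma$ a matrix-valued function on the unitary dual $\widehat{G}$ with $\sigma(\xi) \in \mathbb{C}^{d_\xi \times d_\xi}$. Let $1 \leq r < \infty$ and $\gamma > 0$. If $\sum_{[\xi] \in \widehat{G}} d_\xi^{r(2/r - 1/2)} \langle \xi \rangle_{\mathscr{G}}^{\gamma r} \|\sigma(\xi)\|_{HS}^r < \infty$, then for every $\beta$ with $\frac{r}{1 + \gamma r} < \beta < \infty$ we have $\sum_{[\xi] \in \widehat{G}} d_\xi^{\beta(2/\beta - 1/2)} \|\sigma(\xi)\|_{HS}^\beta < \infty$. -/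
/-!
Write the `β`-summand as `t_ξ ^ (β / r) * d_ξ ^ (2 (1 - β / r)) * ⟨ξ⟩ ^ (-γβ)`, where `t_ξ` is the
summable `r`-summand. For `r ≤ β` the second factor is at most `1`, and `ℓ¹ ⊆ ℓ^{β/r}`.
For `β < r` the second factor is `v_ξ ^ (1 - β / r)` with `v_ξ = d_ξ² ⟨ξ⟩^(-s)`,
`s = γβr / (r - β) > 1`, so Young's inequality bounds the summand by `t_ξ + v_ξ`. Grouping `v` by
levels, the Peter–Weyl count gives `∑ v_ξ ≤ ∑ₙ |G/Gₙ|^(1-s) ≤ ∑ₙ (2^(1-s))ⁿ < ∞`.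
-/

open MeasureTheory Filter Asymptotics

noncomputable section

/-- The Hilbert–Schmidt (Frobenius) norm of a complex square matrix. -/
def hsNorm {n : ℕ} (M : Matrix (Fin n) (Fin n) ℂ) : ℝ :=
  Real.sqrt (∑ i, ∑ j, ‖M i j‖ ^ 2)

/-- Irreducibility of a unitary representation, via Schur's commutant criterion. -/
def IsIrreducibleRep {G : Type*} [Group G] {n : ℕ}
    (ξ : G →* Matrix.unitaryGroup (Fin n) ℂ) : Prop :=
  ∀ M : Matrix (Fin n) (Fin n) ℂ,
    (∀ x : G, M * (ξ x : Matrix (Fin n) (Fin n) ℂ) = (ξ x : Matrix (Fin n) (Fin n) ℂ) * M) →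
      ∃ c : ℂ, M = c • (1 : Matrix (Fin n) (Fin n) ℂ)

/-- The Fourier coefficient `f̂(ξ) = ∫_G f(x) ξ(x)* dμ(x)` of `f` at a unitary
representation `ξ`. -/
def fourierCoef {G : Type*} [Group G] [TopologicalSpace G] [MeasurableSpace G]
    (μ : Measure G) (f : G → ℂ) {n : ℕ}
    (ξ : G →* Matrix.unitaryGroup (Fin n) ℂ) : Matrix (Fin n) (Fin n) ℂ :=
  Matrix.of fun i j => ∫ x, f x * (starRingEnd ℂ) ((ξ x : Matrix (Fin n) (Fin n) ℂ) j i) ∂μ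

/-- A compact Vilenkin group structure on a profinite group `G`: a strictly decreasing
sequence of open subgroups starting at `G`, forming a neighbourhood basis of the identity,
with finite indices and `2 ≤ |G_n/G_{n+1}|`. -/
structure VilenkinData (G : Type*) [Group G] [TopologicalSpace G] where
  seq : ℕ → Subgroup G
  top_eq : seq 0 = ⊤
  isOpen : ∀ n, IsOpen (seq n : Set G)
  strictAnti : StrictAnti seq
  basis : (nhds (1 : G)).HasBasis (fun _ : ℕ => True) fun n => (seq n : Set G)
  index_ne_zero : ∀ n, (seq n).index ≠ 0
  two_le_relindex : ∀ n, 2 ≤ (seq (n + 1)).relIndex (seq n)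

theorem Summable.rpow_of_one_le {ι : Type*} {f : ι → ℝ} (hf₀ : 0 ≤ f) (hf : Summable f)
    {p : ℝ} (hp : 1 ≤ p) : Summable fun i => f i ^ p := by
  have h₁ : Memℓp f 1 := memℓp_gen (by simpa [Real.norm_of_nonneg (hf₀ _)] using hf)
  have hp' : (1 : ENNReal) ≤ ENNReal.ofReal p := by simpa using hp
  have hp₀ : 0 < (ENNReal.ofReal p).toReal := by rw [ENNReal.toReal_ofReal] <;> linarith
  have := (memℓp_gen_iff hp₀).1 (h₁.of_exponent_ge hp')
  simpa [Real.norm_of_nonneg (hf₀ _), ENNReal.toReal_ofReal (by linarith : (0:ℝ) ≤ p)] using this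

theorem Summable.rpow_mul_rpow_one_sub {ι : Type*} {f g : ι → ℝ} (hf₀ : 0 ≤ f) (hg₀ : 0 ≤ g)
    (hf : Summable f) (hg : Summable g) {θ : ℝ} (hθ₀ : 0 ≤ θ) (hθ₁ : θ ≤ 1) :
    Summable fun i => f i ^ θ * g i ^ (1 - θ) := by
  refine (hf.add hg).of_nonneg_of_le
    (fun i => mul_nonneg (Real.rpow_nonneg (hf₀ i) _) (Real.rpow_nonneg (hg₀ i) _)) fun i => ?_
  calc f i ^ θ * g i ^ (1 - θ) ≤ θ * f i + (1 - θ) * g i :=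
        Real.geom_mean_le_arith_mean2_weighted hθ₀ (by linarith) (hf₀ i) (hg₀ i) (by ring)
    _ ≤ f i + g i := by nlinarith [mul_nonneg (sub_nonneg.2 hθ₁) (hf₀ i), mul_nonneg hθ₀ (hg₀ i)]

theorem summable_mul_comp_of_summable_fiber {ι κ : Type*} {w : ι → ℝ} (hw : 0 ≤ w)
    (lvl : ι → κ) {c : κ → ℝ} (hc : 0 ≤ c) (hfib : ∀ n, Summable fun i : {i // lvl i = n} => w i)
    (hsum : Summable fun n => (∑' i : {i // lvl i = n}, w i) * c n) :
    Summable fun i => w i * c (lvl i) := by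
  refine (Equiv.sigmaFiberEquiv lvl).summable_iff.1 <|
    (summable_sigma_of_nonneg fun _ => mul_nonneg (hw _) (hc _)).2 ⟨fun n => ?_, ?_⟩
  · exact ((hfib n).mul_right (c n)).congr fun i => by simp [Equiv.sigmaFiberEquiv, i.2]
  · refine hsum.congr fun n => ?_
    simp only [Equiv.sigmaFiberEquiv, Equiv.coe_fn_mk]
    rw [← tsum_mul_right]
    exact tsum_congr fun i => by rw [i.2]

namespace VilenkinData

variable {G : Type*} [Group G] [TopologicalSpace G] (V : VilenkinData G)

theorem two_pow_le_index (n : ℕ) : 2 ^ n ≤ (V.seq n).index := by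
  induction n with
  | zero => simp [V.top_eq]
  | succ n ih =>
    rw [← Subgroup.relIndex_mul_index (V.strictAnti n.lt_succ_self).le, pow_succ']
    exact Nat.mul_le_mul (V.two_le_relindex n) ih

theorem summable_index_rpow {s : ℝ} (hs : 1 < s) :
    Summable fun n => ((V.seq n).index : ℝ) ^ (1 - s) := by
  refine (summable_geometric_of_lt_one (Real.rpow_nonneg zero_le_two (1 - s))
    (Real.rpow_lt_one_of_one_lt_of_neg one_lt_two (by linarith))).of_nonneg_of_le
    (fun n => Real.rpow_nonneg (Nat.cast_nonneg _) _) fun n => ?_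
  rw [← Real.rpow_mul_natCast zero_le_two, mul_comm, Real.rpow_natCast_mul zero_le_two]
  exact Real.rpow_le_rpow_of_nonpos (by positivity) (mod_cast V.two_pow_le_index n)
    (by linarith)

theorem summable_sq_mul_index_rpow_neg {ι : Type*} {dim lvl : ι → ℕ}
    (hcount : ∀ n, HasSum (fun i : {i // lvl i ≤ n} => (dim i.1 : ℝ) ^ 2) ((V.seq n).index : ℝ))
    {s : ℝ} (hs : 1 < s) :
    Summable fun i => (dim i : ℝ) ^ 2 * ((V.seq (lvl i)).index : ℝ) ^ (-s) := by
  have hincl (n : ℕ) :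
      Function.Injective fun i : {i // lvl i = n} => (⟨i.1, i.2.le⟩ : {i // lvl i ≤ n}) := by
    intro i j h
    exact Subtype.ext (congrArg Subtype.val h :)
  have hfib (n : ℕ) : Summable fun i : {i // lvl i = n} => (dim i : ℝ) ^ 2 :=
    ((hcount n).summable.comp_injective (hincl n) :)
  have hsum : Summable fun n =>
      (∑' i : {i // lvl i = n}, (dim i : ℝ) ^ 2) * ((V.seq n).index : ℝ) ^ (-s) := by
    refine (V.summable_index_rpow hs).of_nonneg_of_le (fun n => mul_nonneg
      (tsum_nonneg fun i => sq_nonneg _) (Real.rpow_nonneg (Nat.cast_nonneg _) _)) fun n => ?_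
    have hN : (0 : ℝ) < (V.seq n).index :=
      Nat.cast_pos.2 (Nat.pos_of_ne_zero (V.index_ne_zero n))
    calc (∑' i : {i // lvl i = n}, (dim i : ℝ) ^ 2) * ((V.seq n).index : ℝ) ^ (-s)
        ≤ (V.seq n).index * ((V.seq n).index : ℝ) ^ (-s) := by
          gcongr
          exact (tsum_comp_le_tsum_of_inj (hcount n).summable (fun _ => sq_nonneg _)
            (hincl n)).trans_eq (hcount n).tsum_eq
      _ = ((V.seq n).index : ℝ) ^ (1 - s) := by
          rw [sub_eq_add_neg, Real.rpow_add hN, Real.rpow_one]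
  exact summable_mul_comp_of_summable_fiber (fun i => sq_nonneg (dim i : ℝ)) lvl
    (fun n => Real.rpow_nonneg (Nat.cast_nonneg ((V.seq n).index)) (-s)) hfib hsum

end VilenkinData

theorem rpow_mul_rpow_eq_rpow_div_mul_rpow {x y z r β γ : ℝ} (hx : 0 < x) (hy : 0 < y)
    (hz : 0 ≤ z) (hr : r ≠ 0) (hβ : β ≠ 0) :
    x ^ (β * (2 / β - 1 / 2)) * z ^ β =
      (x ^ (r * (2 / r - 1 / 2)) * y ^ (γ * r) * z ^ r) ^ (β / r) *
        (x ^ (2 * (1 - β / r)) * y ^ (-(γ * β))) := by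
  rw [Real.mul_rpow (by positivity) (Real.rpow_nonneg hz _), Real.mul_rpow (by positivity)
    (by positivity), ← Real.rpow_mul hx.le, ← Real.rpow_mul hy.le, ← Real.rpow_mul hz,
    mul_div_cancel₀ β hr]
  have hx_exp : r * (2 / r - 1 / 2) * (β / r) + 2 * (1 - β / r) = β * (2 / β - 1 / 2) := by
    field_simp
    ring
  have hy_exp : y ^ (γ * r * (β / r)) * y ^ (-(γ * β)) = 1 := by
    rw [← Real.rpow_add hy, mul_assoc, mul_div_cancel₀ β hr, add_neg_cancel, Real.rpow_zero]
  rw [← hx_exp, Real.rpow_add hx]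
  linear_combination (-(x ^ (r * (2 / r - 1 / 2) * (β / r)) * x ^ (2 * (1 - β / r)) * z ^ β)) *
    hy_exp

theorem rpow_mul_rpow_neg_eq_sq_mul_rpow {x y θ c : ℝ} (hx : 0 ≤ x) (hy : 0 ≤ y) (hθ : θ ≠ 1) :
    x ^ (2 * (1 - θ)) * y ^ (-c) = (x ^ 2 * y ^ (-(c / (1 - θ)))) ^ (1 - θ) := by
  rw [Real.mul_rpow (sq_nonneg x) (Real.rpow_nonneg hy _), ← Real.rpow_mul hy,
    ← Real.rpow_two, ← Real.rpow_mul hx, neg_mul, div_mul_cancel₀ c (sub_ne_zero.2 hθ.symm)]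

theorem summability_shift_general
    {G : Type*} [Group G] [TopologicalSpace G]
    (V : VilenkinData G) (ι : Type) (dim : ι → ℕ) (hdim : ∀ i, 0 < dim i) (lvl : ι → ℕ)
    (hcount : ∀ n, HasSum (fun i : {i // lvl i ≤ n} => ((dim i.1 : ℝ)) ^ 2)
      ((V.seq n).index : ℝ))
    (σ : ∀ i, Matrix (Fin (dim i)) (Fin (dim i)) ℂ)
    (r γ : ℝ) (hr : 1 ≤ r) (hγ : 0 < γ)
    (hσ : Summable fun i =>
      (dim i : ℝ) ^ (r * (2 / r - 1 / 2)) * ((V.seq (lvl i)).index : ℝ) ^ (γ * r) *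
        hsNorm (σ i) ^ r) :
    ∀ β : ℝ, r / (1 + γ * r) < β →
      Summable fun i => (dim i : ℝ) ^ (β * (2 / β - 1 / 2)) * hsNorm (σ i) ^ β := by
  intro β hβ
  have hr₀ : 0 < r := by linarith
  have hβ₀ : 0 < β := lt_trans (by positivity) hβ
  have hd (i : ι) : (1 : ℝ) ≤ dim i := by exact_mod_cast hdim i
  have hN (i : ι) : (1 : ℝ) ≤ (V.seq (lvl i)).index := by
    exact_mod_cast Nat.one_le_iff_ne_zero.2 (V.index_ne_zero _)
  have hσ₀ (i : ι) : 0 ≤ hsNorm (σ i) := Real.sqrt_nonneg _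
  set t : ι → ℝ := fun i => (dim i : ℝ) ^ (r * (2 / r - 1 / 2)) *
    ((V.seq (lvl i)).index : ℝ) ^ (γ * r) * hsNorm (σ i) ^ r
  have ht₀ : 0 ≤ t := fun i => mul_nonneg (mul_nonneg (by positivity) (by positivity))
    (Real.rpow_nonneg (hσ₀ i) _)
  have hsplit (i : ι) : (dim i : ℝ) ^ (β * (2 / β - 1 / 2)) * hsNorm (σ i) ^ β =
      t i ^ (β / r) * ((dim i : ℝ) ^ (2 * (1 - β / r)) *
        ((V.seq (lvl i)).index : ℝ) ^ (-(γ * β))) :=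
    rpow_mul_rpow_eq_rpow_div_mul_rpow (by linarith [hd i]) (by linarith [hN i]) (hσ₀ i)
      hr₀.ne' hβ₀.ne'
  rcases le_or_gt r β with hrβ | hβr
  · refine (hσ.rpow_of_one_le ht₀ ((one_le_div hr₀).2 hrβ)).of_nonneg_of_le
      (fun i => mul_nonneg (by positivity) (Real.rpow_nonneg (hσ₀ i) _)) fun i => ?_
    rw [hsplit i]
    refine mul_le_of_le_one_right (Real.rpow_nonneg (ht₀ i) _) (mul_le_one₀ ?_ (by positivity) ?_)
    · exact Real.rpow_le_one_of_one_le_of_nonpos (hd i) (by linarith [(one_le_div hr₀).2 hrβ])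
    · exact Real.rpow_le_one_of_one_le_of_nonpos (hN i) (neg_nonpos.2 (by positivity))
  · have hθ₁ : β / r < 1 := (div_lt_one hr₀).2 hβr
    have hs : 1 < γ * β / (1 - β / r) := by
      rw [one_lt_div (by linarith), sub_lt_comm, lt_div_iff₀ hr₀]
      nlinarith [(div_lt_iff₀ (by positivity : 0 < 1 + γ * r)).1 hβ]
    refine (hσ.rpow_mul_rpow_one_sub ht₀ (fun i => by positivity)
      (V.summable_sq_mul_index_rpow_neg hcount hs) (by positivity) hθ₁.le).congr fun i => ?_
    rw [hsplit i, rpow_mul_rpow_neg_eq_sq_mul_rpow (by positivity) (by positivity) hθ₁.ne]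

/-- **Auxiliary summability proposition.** Let `G` be a compact Vilenkin group with unitary
dual indexed by `ι` (dimensions `dim`, levels `lvl`, satisfying the Peter–Weyl counting
identity `∑_{⟨ξ⟩ ≤ |G/G_n|} d_ξ² = |G/G_n|`). If
`∑ d_ξ^{r(2/r-1/2)} ⟨ξ⟩^{γr} ‖σ(ξ)‖_HS^r < ∞` then
`∑ d_ξ^{β(2/β-1/2)} ‖σ(ξ)‖_HS^β < ∞` for all `β` with `r/(1+γr) < β < ∞`. -/
theorem summability_shift
    {G : Type*} [Group G] [TopologicalSpace G] [IsTopologicalGroup G] [CompactSpace G]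
    [TotallyDisconnectedSpace G]
    (V : VilenkinData G) (ι : Type) (dim : ι → ℕ) (hdim : ∀ i, 0 < dim i) (lvl : ι → ℕ)
    (hcount : ∀ n, HasSum (fun i : {i // lvl i ≤ n} => ((dim i.1 : ℝ)) ^ 2)
      ((V.seq n).index : ℝ))
    (σ : ∀ i, Matrix (Fin (dim i)) (Fin (dim i)) ℂ)
    (r γ : ℝ) (hr : 1 ≤ r) (hγ : 0 < γ)
    (hσ : Summable fun i =>
      (dim i : ℝ) ^ (r * (2 / r - 1 / 2)) * ((V.seq (lvl i)).index : ℝ) ^ (γ * r) *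
        hsNorm (σ i) ^ r) :
    ∀ β : ℝ, r / (1 + γ * r) < β →
      Summable fun i => (dim i : ℝ) ^ (β * (2 / β - 1 / 2)) * hsNorm (σ i) ^ β :=
  summability_shift_general V ι dim hdim lvl hcount σ r γ hr hγ hσ

end
end

section
/- Let $G$ be a compact Vilenkin group with subgroup sequence $\{G_n\}$ and let $f \in L^2(\mu_G)$. For every $n \in \mathbb{N}_0$: $\Big(\sum_{\langle \xi \rangle_{\mathscr{G}} > |G/G_n|} d_\xi \|\widehat{f}(\xi)\|_{HS}^2\Big)^{1/2} \leq \frac{1}{\sqrt{2}}\, \omega_2(f, \mathscr{G}, n)$, where $\omega_2(f, \mathscr{G}, n) := \sup_{h \in G_n} \|f(h\,\cdot) - f(\cdot)\|_{L^2(\mu_G)}$. -/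
open MeasureTheory Filter Asymptotics

noncomputable section

/-- Data for the unitary dual `Ĝ` of a compact Vilenkin group `G`: a family of pairwise
inequivalent continuous irreducible unitary representations indexed by `ι`, with dimensions
`dim`, levels `lvl` (so `⟨ξ_i⟩ = |G/G_{lvl i}|`), satisfying the Plancherel identity and the
Peter–Weyl counting identity. -/
structure DualData (G : Type*) [Group G] [TopologicalSpace G] [MeasurableSpace G]
    (V : VilenkinData G) (μ : Measure G) where
  ι : Type
  dim : ι → ℕ
  dim_pos : ∀ i, 0 < dim i
  lvl : ι → ℕ
  rep : ∀ i, G →* Matrix.unitaryGroup (Fin (dim i)) ℂ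
  rep_continuous : ∀ i, Continuous fun x => ((rep i) x : Matrix (Fin (dim i)) (Fin (dim i)) ℂ)
  rep_irr : ∀ i, IsIrreducibleRep (rep i)
  lvl_triv : ∀ i, ∀ x ∈ V.seq (lvl i), rep i x = 1
  lvl_min : ∀ i, 0 < lvl i → ∃ x ∈ V.seq (lvl i - 1), rep i x ≠ 1
  plancherel : ∀ f : G → ℂ, MemLp f 2 μ →
    ∫ x, ‖f x‖ ^ 2 ∂μ = ∑' i, (dim i : ℝ) * hsNorm (fourierCoef μ f (rep i)) ^ 2
  count : ∀ n, HasSum (fun i : {i // lvl i ≤ n} => ((dim i.1 : ℝ)) ^ 2) ((V.seq n).index : ℝ)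


/-! For `h ∈ G_n` the function `f(h ·) - f` has Fourier coefficients `f̂(ξ) (ξ(h) - 1)`, so
Plancherel gives `∑ d_ξ ‖f̂(ξ) (ξ(h) - 1)‖²_HS ≤ ω₂(f, 𝒢, n)²`. Since `ξ(h)` is unitary,
`‖M (ξ(h) - 1)‖²_HS = 2 ‖M‖²_HS - 2 Re tr(M* M ξ(h))`, and averaging over `h ∈ G_n` kills the trace
term as soon as `∫_{G_n} ξ = 0`; this leaves `2 μ(G_n) ∑ d_ξ ‖f̂(ξ)‖²_HS ≤ μ(G_n) ω₂(f, 𝒢, n)²`.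

The vanishing of `∫_{G_n} ξ` beyond level `n` is Plancherel for `e = [G : G_n] 𝟙_{G_n}`: its
coefficient is `1` at every `ξ` trivial on `G_n`, and these alone already account for
`∑_{⟨ξ⟩ ≤ |G/G_n|} d_ξ² = [G : G_n] = ‖e‖²₂`, so `ê(ξ) = [G : G_n] (∫_{G_n} ξ)*` vanishes at all
other `ξ`. -/

open scoped ComplexConjugate Matrix

section HilbertSchmidt

variable {d : ℕ}

lemma hsNorm_sq (M : Matrix (Fin d) (Fin d) ℂ) : hsNorm M ^ 2 = ∑ i, ∑ j, ‖M i j‖ ^ 2 :=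
  Real.sq_sqrt (by positivity)

lemma hsNorm_nonneg (M : Matrix (Fin d) (Fin d) ℂ) : 0 ≤ hsNorm M :=
  Real.sqrt_nonneg _

lemma hsNorm_eq_zero_iff {M : Matrix (Fin d) (Fin d) ℂ} : hsNorm M = 0 ↔ M = 0 := by
  rw [← sq_eq_zero_iff, hsNorm_sq, ← Matrix.ext_iff]
  simp [Finset.sum_eq_zero_iff_of_nonneg, Finset.sum_nonneg, sq_nonneg]

lemma hsNorm_one_sq : hsNorm (1 : Matrix (Fin d) (Fin d) ℂ) ^ 2 = d := by
  simp [hsNorm_sq, Matrix.one_apply, apply_ite]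

lemma trace_mul_eq_sum {m n R : Type*} [Fintype m] [Fintype n] [NonUnitalNonAssocSemiring R]
    (A : Matrix m n R) (B : Matrix n m R) : (A * B).trace = ∑ i, ∑ j, A i j * B j i := by
  simp [Matrix.trace, Matrix.mul_apply]

lemma hsNorm_sq_eq_re_trace (M : Matrix (Fin d) (Fin d) ℂ) :
    hsNorm M ^ 2 = (Mᴴ * M).trace.re := by
  simp only [hsNorm_sq, Matrix.trace, Matrix.diag_apply, Matrix.mul_apply,
    Matrix.conjTranspose_apply, Complex.re_sum, RCLike.star_def, Complex.sq_norm,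
    ← Complex.normSq_eq_conj_mul_self, Complex.ofReal_re]
  rw [Finset.sum_comm]

lemma hsNorm_mul_of_mem_unitaryGroup (M : Matrix (Fin d) (Fin d) ℂ)
    {U : Matrix (Fin d) (Fin d) ℂ} (hU : U ∈ Matrix.unitaryGroup (Fin d) ℂ) :
    hsNorm (M * U) = hsNorm M := by
  have hUU : U * Uᴴ = 1 := Matrix.mem_unitaryGroup_iff.1 hU
  rw [← sq_eq_sq₀ (hsNorm_nonneg _) (hsNorm_nonneg _), hsNorm_sq_eq_re_trace,
    hsNorm_sq_eq_re_trace, Matrix.conjTranspose_mul, Matrix.mul_assoc, Matrix.trace_mul_comm,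
    Matrix.mul_assoc, Matrix.mul_assoc, hUU, Matrix.mul_one]

lemma hsNorm_mul_sub_one_sq (M : Matrix (Fin d) (Fin d) ℂ)
    {U : Matrix (Fin d) (Fin d) ℂ} (hU : U ∈ Matrix.unitaryGroup (Fin d) ℂ) :
    hsNorm (M * (U - 1)) ^ 2 = 2 * hsNorm M ^ 2 - 2 * (Mᴴ * M * U).trace.re := by
  have hMU := congrArg (· ^ 2) (hsNorm_mul_of_mem_unitaryGroup M hU)
  simp only [hsNorm_sq_eq_re_trace] at hMU ⊢
  have hcross : ((M * U)ᴴ * M).trace = star (Mᴴ * M * U).trace := by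
    rw [← Matrix.trace_conjTranspose]
    simp [Matrix.conjTranspose_mul, Matrix.mul_assoc]
  rw [Matrix.mul_sub, Matrix.mul_one, Matrix.conjTranspose_sub, Matrix.sub_mul, Matrix.mul_sub,
    Matrix.mul_sub, Matrix.trace_sub, Matrix.trace_sub, Matrix.trace_sub, hcross,
    ← Matrix.mul_assoc Mᴴ M]
  simp only [Complex.sub_re, RCLike.star_def, Complex.conj_re]
  linarith

end HilbertSchmidt

section FourierCoef

variable {G : Type*} [Group G] [TopologicalSpace G] [MeasurableSpace G]
  {μ : Measure G} {d : ℕ} {ξ : G →* Matrix.unitaryGroup (Fin d) ℂ}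

lemma fourierCoef_eq_zero_of_ae_eq_zero {f : G → ℂ} (hf : f =ᵐ[μ] 0) : fourierCoef μ f ξ = 0 := by
  ext i j
  exact integral_eq_zero_of_ae (hf.mono fun x hx => by simp [hx])

lemma fourierCoef_indicator_const_apply {s : Set G} (hs : MeasurableSet s) (c : ℂ) (i j : Fin d) :
    fourierCoef μ (s.indicator fun _ => c) ξ i j =
      c * conj (∫ x in s, (ξ x : Matrix (Fin d) (Fin d) ℂ) j i ∂μ) := by
  simp only [fourierCoef, Matrix.of_apply, ← integral_conj, ← integral_const_mul]
  rw [← integral_indicator hs]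
  congr 1 with x
  by_cases hx : x ∈ s <;> simp [hx]

variable [OpensMeasurableSpace G]

lemma integrable_mul_conj_rep_apply {f : G → ℂ} (hf : Integrable f μ)
    (hξ : Continuous fun x => (ξ x : Matrix (Fin d) (Fin d) ℂ)) (i j : Fin d) :
    Integrable (fun x => f x * conj ((ξ x : Matrix (Fin d) (Fin d) ℂ) i j)) μ :=
  hf.mul_bdd (c := 1) (hξ.matrix_elem i j).star.aestronglyMeasurable
    (Eventually.of_forall fun x => by
      rw [RCLike.norm_conj]
      exact entry_norm_bound_of_unitary (ξ x).2 i j)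

lemma integrable_rep_apply [IsFiniteMeasure μ]
    (hξ : Continuous fun x => (ξ x : Matrix (Fin d) (Fin d) ℂ)) (i j : Fin d) :
    Integrable (fun x => (ξ x : Matrix (Fin d) (Fin d) ℂ) i j) μ :=
  Integrable.of_bound (hξ.matrix_elem i j).aestronglyMeasurable 1
    (Eventually.of_forall fun x => entry_norm_bound_of_unitary (ξ x).2 i j)

lemma integrable_trace_mul_rep [IsFiniteMeasure μ] (A : Matrix (Fin d) (Fin d) ℂ)
    (hξ : Continuous fun x => (ξ x : Matrix (Fin d) (Fin d) ℂ)) :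
    Integrable (fun x => (A * ξ x).trace) μ := by
  simp_rw [trace_mul_eq_sum]
  exact integrable_finsetSum _ fun l _ => integrable_finsetSum _ fun k _ =>
    (integrable_rep_apply hξ k l).const_mul _

lemma integral_trace_mul_rep [IsFiniteMeasure μ] (A : Matrix (Fin d) (Fin d) ℂ)
    (hξ : Continuous fun x => (ξ x : Matrix (Fin d) (Fin d) ℂ)) :
    ∫ x, (A * ξ x).trace ∂μ = ∑ l, ∑ k, A l k * ∫ x, (ξ x : Matrix (Fin d) (Fin d) ℂ) k l ∂μ := by
  have hint : ∀ l k, Integrable (fun x => A l k * (ξ x : Matrix (Fin d) (Fin d) ℂ) k l) μ :=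
    fun l k => (integrable_rep_apply hξ k l).const_mul _
  simp_rw [trace_mul_eq_sum]
  rw [integral_finsetSum _ fun l _ => integrable_finsetSum _ fun k _ => hint l k]
  simp_rw [integral_finsetSum _ fun k _ => hint _ k, integral_const_mul]

lemma integrable_hsNorm_mul_rep_sub_one_sq [IsFiniteMeasure μ] (M : Matrix (Fin d) (Fin d) ℂ)
    (hξ : Continuous fun x => (ξ x : Matrix (Fin d) (Fin d) ℂ)) :
    Integrable (fun x => hsNorm (M * ((ξ x : Matrix (Fin d) (Fin d) ℂ) - 1)) ^ 2) μ := by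
  have hre : Integrable (fun x => (Mᴴ * M * ξ x).trace.re) μ := (integrable_trace_mul_rep _ hξ).re
  simp_rw [hsNorm_mul_sub_one_sq M (ξ _).2]
  exact (integrable_const _).sub (hre.const_mul 2)

lemma integral_hsNorm_mul_rep_sub_one_sq [IsFiniteMeasure μ] (M : Matrix (Fin d) (Fin d) ℂ)
    (hξ : Continuous fun x => (ξ x : Matrix (Fin d) (Fin d) ℂ))
    (hξ₀ : ∀ k l, ∫ x, (ξ x : Matrix (Fin d) (Fin d) ℂ) k l ∂μ = 0) :
    ∫ x, hsNorm (M * ((ξ x : Matrix (Fin d) (Fin d) ℂ) - 1)) ^ 2 ∂μ =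
      2 * μ.real Set.univ * hsNorm M ^ 2 := by
  have hcross : ∫ x, (Mᴴ * M * ξ x).trace.re ∂μ = 0 := by
    have := integral_re (integrable_trace_mul_rep (μ := μ) (Mᴴ * M) hξ)
    simp_all [integral_trace_mul_rep]
  have hre : Integrable (fun x => (Mᴴ * M * ξ x).trace.re) μ := (integrable_trace_mul_rep _ hξ).re
  simp_rw [hsNorm_mul_sub_one_sq M (ξ _).2]
  rw [integral_sub (integrable_const _) (hre.const_mul 2),
    integral_const_mul 2 (fun x => (Mᴴ * M * ξ x).trace.re), hcross, integral_const, smul_eq_mul]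
  ring

lemma fourierCoef_sub {f g : G → ℂ} (hf : Integrable f μ) (hg : Integrable g μ)
    (hξ : Continuous fun x => (ξ x : Matrix (Fin d) (Fin d) ℂ)) :
    fourierCoef μ (fun x => f x - g x) ξ = fourierCoef μ f ξ - fourierCoef μ g ξ := by
  ext i j
  simp only [fourierCoef, Matrix.of_apply, Matrix.sub_apply, sub_mul]
  exact integral_sub (integrable_mul_conj_rep_apply hf hξ j i)
    (integrable_mul_conj_rep_apply hg hξ j i)

lemma fourierCoef_comp_mul_left [MeasurableMul G] [μ.IsMulLeftInvariant] {f : G → ℂ}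
    (hf : Integrable f μ) (hξ : Continuous fun x => (ξ x : Matrix (Fin d) (Fin d) ℂ)) (h : G) :
    fourierCoef μ (fun x => f (h * x)) ξ = fourierCoef μ f ξ * ξ h := by
  ext i j
  have hexpand : ∀ y, f y * conj ((ξ (h⁻¹ * y) : Matrix (Fin d) (Fin d) ℂ) j i) =
      ∑ k, (ξ h : Matrix (Fin d) (Fin d) ℂ) k j *
        (f y * conj ((ξ y : Matrix (Fin d) (Fin d) ℂ) k i)) := by
    intro y
    simp only [map_mul, map_inv, Submonoid.coe_mul, Matrix.UnitaryGroup.inv_val,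
      Matrix.mul_apply, Matrix.star_apply, map_sum, RCLike.star_def, Complex.conj_conj,
      Finset.mul_sum]
    exact Finset.sum_congr rfl fun k _ => by ring
  calc ∫ x, f (h * x) * conj ((ξ x : Matrix (Fin d) (Fin d) ℂ) j i) ∂μ
      = ∫ y, f y * conj ((ξ (h⁻¹ * y) : Matrix (Fin d) (Fin d) ℂ) j i) ∂μ := by
        rw [← integral_mul_left_eq_self
          (fun y => f y * conj ((ξ (h⁻¹ * y) : Matrix (Fin d) (Fin d) ℂ) j i)) h]
        simp
    _ = ∑ k, (ξ h : Matrix (Fin d) (Fin d) ℂ) k j *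
          ∫ y, f y * conj ((ξ y : Matrix (Fin d) (Fin d) ℂ) k i) ∂μ := by
        simp_rw [hexpand, ← integral_const_mul]
        exact integral_finsetSum _ fun k _ => (integrable_mul_conj_rep_apply hf hξ k i).const_mul _
    _ = (fourierCoef μ f ξ * ξ h) i j := by
        simp [Matrix.mul_apply, fourierCoef, mul_comm]

lemma fourierCoef_comp_mul_left_sub [MeasurableMul G] [μ.IsMulLeftInvariant] {f : G → ℂ}
    (hf : Integrable f μ) (hξ : Continuous fun x => (ξ x : Matrix (Fin d) (Fin d) ℂ)) (h : G) :
    fourierCoef μ (fun x => f (h * x) - f x) ξ =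
      fourierCoef μ f ξ * ((ξ h : Matrix (Fin d) (Fin d) ℂ) - 1) := by
  rw [fourierCoef_sub (hf.comp_mul_left h) hf hξ, fourierCoef_comp_mul_left hf hξ, Matrix.mul_sub,
    Matrix.mul_one]

end FourierCoef

lemma integral_norm_sq_eq_toReal_eLpNorm_sq {α E : Type*} [MeasurableSpace α]
    [NormedAddCommGroup E] {μ : Measure α} {g : α → E} (hg : MemLp g 2 μ) :
    ∫ x, ‖g x‖ ^ 2 ∂μ = (eLpNorm g 2 μ).toReal ^ 2 := by
  have h := lpNorm_nnreal_eq_integral_norm_rpow (p := 2) two_ne_zero hg.1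
  norm_num at h
  rw [toReal_eLpNorm hg.1, h, ← Real.rpow_natCast,
    ← Real.rpow_mul (integral_nonneg fun _ => by positivity)]
  norm_num

lemma eq_zero_of_tsum_le_tsum_subtype {β : Type*} {F : β → ℝ} (hF : 0 ≤ F) (hs : Summable F)
    {S : Set β} (h : ∑' b, F b ≤ ∑' b : S, F b) {b : β} (hb : b ∉ S) : F b = 0 := by
  have hcompl : ∑' b : ↑Sᶜ, F b ≤ 0 := by
    linarith [Summable.tsum_add_tsum_compl (hs.subtype S) (hs.subtype Sᶜ)]
  exact le_antisymm ((hs.subtype Sᶜ).le_tsum ⟨b, hb⟩ (fun c _ => hF c) |>.trans hcompl) (hF b)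

namespace Subgroup

variable {G : Type*} [Group G] [MeasurableSpace G] (H : Subgroup G)

def normalizedIndicator : G → ℂ := (H : Set G).indicator fun _ => (H.index : ℂ)

variable {H} (μ : Measure G)

lemma memLp_normalizedIndicator (hH : MeasurableSet (H : Set G)) [IsFiniteMeasure μ] :
    MemLp H.normalizedIndicator 2 μ :=
  (memLp_const _).indicator hH

variable [H.FiniteIndex] [MeasurableMul G] [μ.IsMulLeftInvariant] [IsProbabilityMeasure μ]
  (hH : MeasurableSet (H : Set G))
include hH

lemma index_mul_measureReal : (H.index : ℝ) * μ.real H = 1 := by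
  have h := congrArg ENNReal.toReal (H.index_mul_measure hH μ)
  rwa [measure_univ, ENNReal.toReal_mul, ENNReal.toReal_natCast, ENNReal.toReal_one] at h

lemma integral_norm_normalizedIndicator_sq :
    ∫ x, ‖H.normalizedIndicator x‖ ^ 2 ∂μ = H.index := by
  have hsq : (fun x => ‖H.normalizedIndicator x‖ ^ 2) =
      (H : Set G).indicator fun _ => (H.index : ℝ) ^ 2 := by
    ext x
    by_cases hx : x ∈ (H : Set G) <;> simp [normalizedIndicator, hx]
  rw [hsq, integral_indicator_const _ hH, smul_eq_mul, sq, mul_comm, mul_assoc,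
    index_mul_measureReal μ hH, mul_one]

lemma fourierCoef_normalizedIndicator_of_forall_mem_eq_one [TopologicalSpace G] {d : ℕ}
    {ξ : G →* Matrix.unitaryGroup (Fin d) ℂ} (hξ : ∀ x ∈ H, ξ x = 1) :
    fourierCoef μ H.normalizedIndicator ξ = 1 := by
  ext i j
  rw [normalizedIndicator, fourierCoef_indicator_const_apply hH,
    setIntegral_congr_fun hH fun x hx => by rw [hξ x hx], setIntegral_const]
  by_cases hij : i = j
  · subst hij
    simp [← Complex.ofReal_natCast, ← Complex.ofReal_mul, index_mul_measureReal μ hH]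
  · simp [Matrix.one_apply_ne hij, Matrix.one_apply_ne (Ne.symm hij)]

end Subgroup

lemma toReal_eLpNorm_comp_mul_left_sub_le {G E : Type*} [Group G] [MeasurableSpace G]
    [MeasurableMul G] [NormedAddCommGroup E] {μ : Measure G} [μ.IsMulLeftInvariant]
    {p : ENNReal} (hp : 1 ≤ p) {f : G → E} (hf : MemLp f p μ) (h : G) :
    (eLpNorm (fun x => f (h * x) - f x) p μ).toReal ≤ 2 * (eLpNorm f p μ).toReal := by
  have htrans : eLpNorm (fun x => f (h * x)) p μ = eLpNorm f p μ :=
    eLpNorm_comp_measurePreserving hf.1 (measurePreserving_mul_left μ h)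
  have hle : eLpNorm (fun x => f (h * x) - f x) p μ ≤ 2 * eLpNorm f p μ := by
    calc eLpNorm (fun x => f (h * x) - f x) p μ
        ≤ eLpNorm (fun x => f (h * x)) p μ + eLpNorm f p μ :=
          eLpNorm_sub_le (hf.1.comp_measurePreserving (measurePreserving_mul_left μ h)) hf.1 hp
      _ = 2 * eLpNorm f p μ := by rw [htrans, two_mul]
  simpa using ENNReal.toReal_mono (ENNReal.mul_ne_top ENNReal.ofNat_ne_top hf.eLpNorm_ne_top) hle

namespace DualData

variable {G : Type*} [Group G] [TopologicalSpace G] [MeasurableSpace G] {V : VilenkinData G}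
  {μ : Measure G} (D : DualData G V μ)

lemma summable_dim_mul_hsNorm_sq {g : G → ℂ} (hg : MemLp g 2 μ) :
    Summable fun i => (D.dim i : ℝ) * hsNorm (fourierCoef μ g (D.rep i)) ^ 2 := by
  by_contra hns
  have hg0 : g =ᵐ[μ] 0 := by
    have h := D.plancherel g hg
    rw [tsum_eq_zero_of_not_summable hns, integral_norm_sq_eq_toReal_eLpNorm_sq hg,
      sq_eq_zero_iff, ENNReal.toReal_eq_zero_iff] at h
    exact (eLpNorm_eq_zero_iff hg.1 two_ne_zero).1 (h.resolve_right hg.eLpNorm_ne_top)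
  exact hns (by simp [fourierCoef_eq_zero_of_ae_eq_zero hg0, hsNorm_eq_zero_iff.2])

lemma sum_dim_mul_hsNorm_sq_le {g : G → ℂ} (hg : MemLp g 2 μ) (s : Finset D.ι) :
    ∑ i ∈ s, (D.dim i : ℝ) * hsNorm (fourierCoef μ g (D.rep i)) ^ 2 ≤
      (eLpNorm g 2 μ).toReal ^ 2 := by
  rw [← integral_norm_sq_eq_toReal_eLpNorm_sq hg, D.plancherel g hg]
  exact (D.summable_dim_mul_hsNorm_sq hg).sum_le_tsum s fun i _ => by positivity

variable [MeasurableMul G] [OpensMeasurableSpace G] [μ.IsMulLeftInvariant]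
  [IsProbabilityMeasure μ]

lemma tsum_lvl_le_fourierCoef_normalizedIndicator (n : ℕ) :
    ∑' i : {i // D.lvl i ≤ n}, (D.dim i.1 : ℝ) *
      hsNorm (fourierCoef μ (V.seq n).normalizedIndicator (D.rep i.1)) ^ 2 = (V.seq n).index := by
  have : (V.seq n).FiniteIndex := ⟨V.index_ne_zero n⟩
  rw [← (D.count n).tsum_eq]
  congr 1 with i
  have hsub : V.seq n ≤ V.seq (D.lvl i.1) := V.strictAnti.antitone i.2
  rw [Subgroup.fourierCoef_normalizedIndicator_of_forall_mem_eq_one μ (V.isOpen n).measurableSet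
    fun x hx => D.lvl_triv i.1 x (hsub hx), hsNorm_one_sq, sq]

lemma setIntegral_rep_apply_eq_zero {n : ℕ} {i : D.ι} (hi : n < D.lvl i) (k l : Fin (D.dim i)) :
    ∫ x in V.seq n, (D.rep i x : Matrix (Fin (D.dim i)) (Fin (D.dim i)) ℂ) k l ∂μ = 0 := by
  have : (V.seq n).FiniteIndex := ⟨V.index_ne_zero n⟩
  have hH : MeasurableSet (V.seq n : Set G) := (V.isOpen n).measurableSet
  have he := Subgroup.memLp_normalizedIndicator μ hH
  have hterm : (D.dim i : ℝ) *
      hsNorm (fourierCoef μ (V.seq n).normalizedIndicator (D.rep i)) ^ 2 = 0 := by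
    refine eq_zero_of_tsum_le_tsum_subtype (fun _ => by positivity)
      (D.summable_dim_mul_hsNorm_sq he) (S := {i | D.lvl i ≤ n}) ?_ (by simpa using hi)
    rw [← D.plancherel _ he, Subgroup.integral_norm_normalizedIndicator_sq μ hH]
    exact (D.tsum_lvl_le_fourierCoef_normalizedIndicator n).ge
  have hcoef : fourierCoef μ (V.seq n).normalizedIndicator (D.rep i) l k = 0 := by
    simp_all [(D.dim_pos i).ne', hsNorm_eq_zero_iff]
  rw [Subgroup.normalizedIndicator, fourierCoef_indicator_const_apply hH] at hcoef
  simpa [V.index_ne_zero n] using hcoef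

section Translate

variable {f : G → ℂ} (hf : MemLp f 2 μ)
include hf

lemma sum_dim_mul_hsNorm_sq_mul_rep_sub_one_le (h : G) (s : Finset D.ι) :
    ∑ i ∈ s, (D.dim i : ℝ) * hsNorm (fourierCoef μ f (D.rep i) *
        ((D.rep i h : Matrix (Fin (D.dim i)) (Fin (D.dim i)) ℂ) - 1)) ^ 2 ≤
      (eLpNorm (fun x => f (h * x) - f x) 2 μ).toReal ^ 2 := by
  have hg : MemLp (fun x => f (h * x) - f x) 2 μ :=
    (hf.comp_measurePreserving (measurePreserving_mul_left μ h)).sub hf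
  simpa only [fourierCoef_comp_mul_left_sub (hf.integrable one_le_two) (D.rep_continuous _)]
    using D.sum_dim_mul_hsNorm_sq_le hg s

lemma sum_dim_mul_hsNorm_sq_le_half_sq {n : ℕ} {ω : ℝ}
    (hω : ∀ h ∈ V.seq n, (eLpNorm (fun x => f (h * x) - f x) 2 μ).toReal ≤ ω)
    (s : Finset D.ι) (hs : ∀ i ∈ s, n < D.lvl i) :
    ∑ i ∈ s, (D.dim i : ℝ) * hsNorm (fourierCoef μ f (D.rep i)) ^ 2 ≤ ω ^ 2 / 2 := by
  have : (V.seq n).FiniteIndex := ⟨V.index_ne_zero n⟩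
  have hH : MeasurableSet (V.seq n : Set G) := (V.isOpen n).measurableSet
  have hμH : 0 < μ.real (V.seq n) := by
    have := Subgroup.index_mul_measureReal μ hH
    exact measureReal_nonneg.lt_of_ne fun h0 => by simp [← h0] at this
  have hint : ∀ i ∈ s, IntegrableOn (fun h => (D.dim i : ℝ) * hsNorm (fourierCoef μ f (D.rep i) *
      ((D.rep i h : Matrix (Fin (D.dim i)) (Fin (D.dim i)) ℂ) - 1)) ^ 2) (V.seq n) μ :=
    fun i _ => (integrable_hsNorm_mul_rep_sub_one_sq _ (D.rep_continuous i)).const_mul _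
  have hmean : ∫ h in V.seq n, ∑ i ∈ s, (D.dim i : ℝ) * hsNorm (fourierCoef μ f (D.rep i) *
        ((D.rep i h : Matrix (Fin (D.dim i)) (Fin (D.dim i)) ℂ) - 1)) ^ 2 ∂μ =
      2 * μ.real (V.seq n) * ∑ i ∈ s, (D.dim i : ℝ) * hsNorm (fourierCoef μ f (D.rep i)) ^ 2 := by
    rw [integral_finsetSum _ hint, Finset.mul_sum]
    refine Finset.sum_congr rfl fun i hi => ?_
    rw [integral_const_mul, integral_hsNorm_mul_rep_sub_one_sq _ (D.rep_continuous i)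
      (D.setIntegral_rep_apply_eq_zero (hs i hi)), measureReal_restrict_apply_univ]
    ring
  have hle := setIntegral_mono_on (integrable_finsetSum _ hint) (integrableOn_const (C := ω ^ 2))
    hH fun h hh => (D.sum_dim_mul_hsNorm_sq_mul_rep_sub_one_le hf h s).trans
      (pow_le_pow_left₀ ENNReal.toReal_nonneg (hω h hh) 2)
  rw [hmean, setIntegral_const, smul_eq_mul] at hle
  rw [le_div_iff₀ two_pos]
  nlinarith

lemma tsum_dim_mul_hsNorm_sq_le_half_sq {n : ℕ} {ω : ℝ}
    (hω : ∀ h ∈ V.seq n, (eLpNorm (fun x => f (h * x) - f x) 2 μ).toReal ≤ ω) :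
    ∑' i : {i // n < D.lvl i}, (D.dim i.1 : ℝ) * hsNorm (fourierCoef μ f (D.rep i.1)) ^ 2 ≤
      ω ^ 2 / 2 :=
  Real.tsum_le_of_sum_le (fun _ => by positivity) fun s => by
    simpa [Finset.sum_map] using D.sum_dim_mul_hsNorm_sq_le_half_sq hf hω
      (s.map (Function.Embedding.subtype _)) fun i hi => by
        obtain ⟨j, -, rfl⟩ := Finset.mem_map.1 hi
        exact j.2

end Translate

end DualData

theorem sqrt_tail_le_modulus_of_continuity_general
    {G : Type*} [Group G] [TopologicalSpace G] [IsTopologicalGroup G]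
    [MeasurableSpace G] [BorelSpace G]
    (V : VilenkinData G) (μ : Measure G) [μ.IsHaarMeasure] [IsProbabilityMeasure μ]
    (D : DualData G V μ) (f : G → ℂ) (hf : MemLp f 2 μ) (n : ℕ) :
    Real.sqrt (∑' i : {i // n < D.lvl i},
        (D.dim i.1 : ℝ) * hsNorm (fourierCoef μ f (D.rep i.1)) ^ 2) ≤
      (1 / Real.sqrt 2) *
        ⨆ h : V.seq n, (eLpNorm (fun x => f (↑h * x) - f x) 2 μ).toReal := by
  set ω := ⨆ h : V.seq n, (eLpNorm (fun x => f (↑h * x) - f x) 2 μ).toReal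
  have hbdd : BddAbove (Set.range fun h : V.seq n =>
      (eLpNorm (fun x => f (↑h * x) - f x) 2 μ).toReal) :=
    ⟨_, Set.forall_mem_range.2 fun h => toReal_eLpNorm_comp_mul_left_sub_le one_le_two hf h⟩
  have hω : ∀ h ∈ V.seq n, (eLpNorm (fun x => f (h * x) - f x) 2 μ).toReal ≤ ω :=
    fun h hh => le_ciSup hbdd ⟨h, hh⟩
  have hω₀ : 0 ≤ ω := Real.iSup_nonneg fun _ => ENNReal.toReal_nonneg
  calc _ ≤ Real.sqrt (ω ^ 2 / 2) := Real.sqrt_le_sqrt (D.tsum_dim_mul_hsNorm_sq_le_half_sq hf hω)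
    _ = (1 / Real.sqrt 2) * ω := by
      rw [Real.sqrt_div' _ zero_le_two, Real.sqrt_sq hω₀]
      ring

/-- **Lower bound for the modulus of continuity.** For `f ∈ L²(μ_G)` on a compact Vilenkin
group, `(∑_{⟨ξ⟩ > |G/G_n|} d_ξ ‖f̂(ξ)‖²_HS)^{1/2} ≤ (1/√2) ω₂(f,𝒢,n)`, where
`ω₂(f,𝒢,n) := sup_{h ∈ G_n} ‖f(h·) - f‖_{L²}`. -/
theorem sqrt_tail_le_modulus_of_continuity
    {G : Type*} [Group G] [TopologicalSpace G] [IsTopologicalGroup G] [CompactSpace G]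
    [TotallyDisconnectedSpace G] [MeasurableSpace G] [BorelSpace G]
    (V : VilenkinData G) (μ : Measure G) [μ.IsHaarMeasure] [IsProbabilityMeasure μ]
    (D : DualData G V μ) (f : G → ℂ) (hf : MemLp f 2 μ) (n : ℕ) :
    Real.sqrt (∑' i : {i // n < D.lvl i},
        (D.dim i.1 : ℝ) * hsNorm (fourierCoef μ f (D.rep i.1)) ^ 2) ≤
      (1 / Real.sqrt 2) *
        ⨆ h : V.seq n, (eLpNorm (fun x => f (↑h * x) - f x) 2 μ).toReal :=
  sqrt_tail_le_modulus_of_continuity_general V μ D f hf n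

end
end

section
/- The constant $1/\sqrt{2}$ in the inequality $\big(\sum_{\langle \xi \rangle_{\mathscr{G}} > |G/G_n|} d_\xi \|\widehat{f}(\xi)\|_{HS}^2\big)^{1/2} \leq \frac{1}{\sqrt{2}}\omega_2(f,\mathscr{G},n)$ is sharp: for a compact Vilenkin group $G$ with subgroup sequence $\{G_n\}$, taking $f = \mathbb{1}_{G_m}$ with $m > n$ gives $\omega_2(\mathbb{1}_{G_m}, \mathscr{G}, n) = \sqrt{2\mu_G(G_m)}$ and $\sum_{\langle \xi \rangle_{\mathscr{G}} > |G/G_n|} d_\xi \|\widehat{\mathbb{1}}_{G_m}(\xi)\|_{HS}^2 = \mu_G(G_m)\big(1 - \frac{|G/G_n|}{|G/G_m|}\big)$, so the ratio of the left side to $\frac{1}{\sqrt{2}}\omega_2$ equals $\sqrt{1 - |G/G_n|/|G/G_m|} \to 1$ as $m \to \infty$. -/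
open MeasureTheory Filter Asymptotics

noncomputable section

/-!
For `h ∈ G_n \ G_m` the translate `1_{G_m}(h ·)` is the indicator of the coset `h⁻¹G_m`, which is
disjoint from `G_m`, so `‖1_{G_m}(h ·) - 1_{G_m}‖₂² = 2μ(G_m)`; for `h ∈ G_m` the difference
vanishes. A representation of level `≤ n ≤ m` is trivial on `G_m`, so there `1̂_{G_m}(ξ) = μ(G_m) I`,
and by the Peter–Weyl count these coefficients carry `μ(G_m)² |G/G_n|` of the total Plancherel mass
`μ(G_m) = 1/|G/G_m|`. Since `|G/G_m| → ∞`, the ratio tends to `1`.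
-/

open scoped Classical

section Translate

variable {G : Type*} [Group G] [MeasurableSpace G] (μ : Measure G) {H : Subgroup G} {h : G}

theorem eLpNorm_indicator_translate_sub_of_mem (hh : h ∈ H) :
    eLpNorm (fun x => (if h * x ∈ H then (1 : ℂ) else 0) - (if x ∈ H then 1 else 0)) 2 μ = 0 := by
  simp [Subgroup.mul_mem_cancel_left H hh]

variable [MeasurableMul G] [μ.IsMulLeftInvariant]

theorem eLpNorm_indicator_translate_sub_of_notMem (hH : MeasurableSet (H : Set G)) (hh : h ∉ H) :
    eLpNorm (fun x => (if h * x ∈ H then (1 : ℂ) else 0) - (if x ∈ H then 1 else 0)) 2 μ =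
      (2 * μ H) ^ (1 / 2 : ℝ) := by
  set T : Set G := (h * ·) ⁻¹' H
  have hdisj : Disjoint T H := Set.disjoint_left.mpr fun x hxT hxH =>
    hh (by simpa using mul_mem hxT (inv_mem hxH))
  have hnorm : ∀ x, ‖(if h * x ∈ H then (1 : ℂ) else 0) - (if x ∈ H then 1 else 0)‖ =
      ‖(T ∪ H).indicator (fun _ => (1 : ℂ)) x‖ := by
    intro x
    by_cases hxT : h * x ∈ H <;> by_cases hxH : x ∈ H
    · exact (Set.disjoint_left.mp hdisj hxT hxH).elim
    all_goals simp [T, hxT, hxH]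
  have hμ : μ (T ∪ H) = 2 * μ H := by
    rw [measure_union hdisj hH, measure_preimage_mul, two_mul]
  rw [eLpNorm_congr_norm_ae (.of_forall hnorm),
    eLpNorm_indicator_const ((hH.preimage (measurable_const_mul h)).union hH) two_ne_zero
      ENNReal.ofNat_ne_top, hμ]
  simp

theorem toReal_eLpNorm_indicator_translate_sub_of_notMem (hH : MeasurableSet (H : Set G))
    (hh : h ∉ H) :
    (eLpNorm (fun x => (if h * x ∈ H then (1 : ℂ) else 0) - (if x ∈ H then 1 else 0)) 2 μ).toReal =
      Real.sqrt (2 * μ.real H) := by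
  rw [eLpNorm_indicator_translate_sub_of_notMem μ hH hh, ← ENNReal.toReal_rpow,
    Real.sqrt_eq_rpow, ENNReal.toReal_mul, measureReal_def]
  norm_num

theorem iSup_eLpNorm_indicator_translate_sub {K : Subgroup G} (hH : MeasurableSet (H : Set G))
    (hKH : ¬K ≤ H) :
    ⨆ k : K, (eLpNorm (fun x => (if (k : G) * x ∈ H then (1 : ℂ) else 0) -
        (if x ∈ H then 1 else 0)) 2 μ).toReal = Real.sqrt (2 * μ.real H) := by
  have hle : ∀ k : K, (eLpNorm (fun x => (if (k : G) * x ∈ H then (1 : ℂ) else 0) -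
      (if x ∈ H then 1 else 0)) 2 μ).toReal ≤ Real.sqrt (2 * μ.real H) := fun k => by
    by_cases hk : (k : G) ∈ H
    · simp only [eLpNorm_indicator_translate_sub_of_mem μ hk, ENNReal.toReal_zero]
      positivity
    · exact (toReal_eLpNorm_indicator_translate_sub_of_notMem μ hH hk).le
  obtain ⟨k, hkK, hkH⟩ := Set.not_subset.mp hKH
  exact le_antisymm (ciSup_le hle)
    ((toReal_eLpNorm_indicator_translate_sub_of_notMem μ hH hkH).symm.le.trans
      (le_ciSup ⟨_, Set.forall_mem_range.mpr hle⟩ ⟨k, hkK⟩))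

end Translate

theorem hsNorm_smul_one_sq {n : ℕ} (c : ℂ) :
    hsNorm (c • (1 : Matrix (Fin n) (Fin n) ℂ)) ^ 2 = n * ‖c‖ ^ 2 := by
  rw [hsNorm, Real.sq_sqrt (by positivity)]
  simp [Matrix.one_apply, apply_ite norm]

theorem fourierCoef_indicator_of_forall_mem_eq_one {G : Type*} [Group G] [TopologicalSpace G]
    [MeasurableSpace G] (μ : Measure G) {n : ℕ} (ξ : G →* Matrix.unitaryGroup (Fin n) ℂ)
    {H : Subgroup G} (hH : MeasurableSet (H : Set G)) (hξ : ∀ x ∈ H, ξ x = 1) :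
    fourierCoef μ (fun x => if x ∈ H then (1 : ℂ) else 0) ξ =
      (μ.real H : ℂ) • (1 : Matrix (Fin n) (Fin n) ℂ) := by
  ext i j
  have hintegrand : (fun x => (if x ∈ H then (1 : ℂ) else 0) *
      starRingEnd ℂ ((ξ x : Matrix (Fin n) (Fin n) ℂ) j i)) =
        (H : Set G).indicator fun _ => (1 : Matrix (Fin n) (Fin n) ℂ) i j := by
    ext x
    by_cases hx : x ∈ H
    · simp [hx, hξ x hx, Matrix.one_apply, eq_comm]
    · simp [hx]
  rw [fourierCoef, Matrix.of_apply, hintegrand, integral_indicator_const _ hH]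
  simp [Complex.real_smul]

namespace VilenkinData

variable {G : Type*} [Group G] [TopologicalSpace G] (V : VilenkinData G)

instance finiteIndex_seq (n : ℕ) : (V.seq n).FiniteIndex :=
  ⟨V.index_ne_zero n⟩

theorem index_strictMono : StrictMono fun n => (V.seq n).index :=
  fun _ _ hnm => Subgroup.index_strictAnti (V.strictAnti hnm)

theorem tendsto_index_atTop : Tendsto (fun n => ((V.seq n).index : ℝ)) atTop atTop :=
  tendsto_natCast_atTop_atTop.comp V.index_strictMono.tendsto_atTop

theorem measureReal_seq [MeasurableSpace G] [OpensMeasurableSpace G] [MeasurableMul G]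
    (μ : Measure G) [μ.IsMulLeftInvariant] [IsProbabilityMeasure μ] (n : ℕ) :
    μ.real (V.seq n) = ((V.seq n).index : ℝ)⁻¹ := by
  have h := congrArg ENNReal.toReal ((V.seq n).index_mul_measure (V.isOpen n).measurableSet μ)
  rw [measure_univ, ENNReal.toReal_mul, ← measureReal_def] at h
  exact eq_inv_of_mul_eq_one_right (by simpa using h)

end VilenkinData

namespace DualData

variable {G : Type*} [Group G] [TopologicalSpace G] [MeasurableSpace G] {V : VilenkinData G}
  {μ : Measure G} (D : DualData G V μ)

theorem hasSum_hsNorm_fourierCoef_indicator [IsFiniteMeasure μ] {H : Subgroup G}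
    (hH : MeasurableSet (H : Set G)) (hμH : μ H ≠ 0) :
    HasSum (fun i => (D.dim i : ℝ) *
        hsNorm (fourierCoef μ (fun x => if x ∈ H then (1 : ℂ) else 0) (D.rep i)) ^ 2)
      (μ.real H) := by
  have hind : (fun x => if x ∈ H then (1 : ℂ) else 0) = (H : Set G).indicator 1 := by
    ext x
    simp [Set.indicator_apply]
  have hnorm : (fun x => ‖(if x ∈ H then (1 : ℂ) else 0)‖ ^ 2) = (H : Set G).indicator 1 := by
    ext x
    by_cases hx : x ∈ H <;> simp [hx]
  have htsum := D.plancherel _ (hind ▸ memLp_indicator_const 2 hH 1 (.inr (measure_ne_top μ _)))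
  rw [hnorm, integral_indicator_one hH] at htsum
  have hsummable : Summable fun i => (D.dim i : ℝ) *
      hsNorm (fourierCoef μ (fun x => if x ∈ H then (1 : ℂ) else 0) (D.rep i)) ^ 2 := by
    by_contra h
    rw [tsum_eq_zero_of_not_summable h, measureReal_eq_zero_iff] at htsum
    exact hμH htsum
  exact htsum ▸ hsummable.hasSum

theorem hasSum_lvl_le_hsNorm_fourierCoef_indicator_seq [OpensMeasurableSpace G] {n m : ℕ}
    (hnm : n ≤ m) :
    HasSum (fun i : {i | D.lvl i ≤ n} => (D.dim i : ℝ) *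
        hsNorm (fourierCoef μ (fun x => if x ∈ V.seq m then (1 : ℂ) else 0) (D.rep i)) ^ 2)
      (μ.real (V.seq m) ^ 2 * (V.seq n).index) := by
  refine ((D.count n).mul_left _).congr_fun fun i => ?_
  have hξ : ∀ x ∈ V.seq m, D.rep i x = 1 :=
    fun x hx => D.lvl_triv i x (V.strictAnti.antitone (i.2.trans hnm) hx)
  simp only [fourierCoef_indicator_of_forall_mem_eq_one μ _ (V.isOpen m).measurableSet hξ,
    hsNorm_smul_one_sq, Complex.norm_real, Real.norm_eq_abs, sq_abs]
  ring

theorem tsum_lvl_gt_hsNorm_fourierCoef_indicator_seq [OpensMeasurableSpace G] [MeasurableMul G]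
    [μ.IsMulLeftInvariant] [IsProbabilityMeasure μ] {n m : ℕ} (hnm : n ≤ m) :
    ∑' i : {i // n < D.lvl i}, (D.dim i.1 : ℝ) *
        hsNorm (fourierCoef μ (fun x => if x ∈ V.seq m then (1 : ℂ) else 0) (D.rep i.1)) ^ 2 =
      μ.real (V.seq m) * (1 - ((V.seq n).index : ℝ) / (V.seq m).index) := by
  have hμ := V.measureReal_seq μ m
  have hindex : ((V.seq m).index : ℝ) ≠ 0 := Nat.cast_ne_zero.mpr (V.index_ne_zero m)
  have hμ0 : μ (V.seq m) ≠ 0 := by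
    rw [← measureReal_ne_zero_iff, hμ]
    exact inv_ne_zero hindex
  have htotal := D.hasSum_hsNorm_fourierCoef_indicator (V.isOpen m).measurableSet hμ0
  have hhigh := (Equiv.subtypeEquivRight (p := fun i => n < D.lvl i)
    (q := (· ∈ {i | D.lvl i ≤ n}ᶜ)) fun _ => not_le.symm).hasSum_iff.mpr
      ((D.hasSum_lvl_le_hsNorm_fourierCoef_indicator_seq hnm).hasSum_iff_compl.mp htotal)
  refine hhigh.tsum_eq.trans ?_
  rw [hμ]
  field_simp

end DualData

open Classical in
theorem modulus_constant_sharp_general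
    {G : Type*} [Group G] [TopologicalSpace G] [IsTopologicalGroup G]
    [MeasurableSpace G] [BorelSpace G]
    (V : VilenkinData G) (μ : Measure G) [μ.IsHaarMeasure] [IsProbabilityMeasure μ]
    (D : DualData G V μ) (n : ℕ) :
    (∀ m, n < m →
      ((⨆ h : V.seq n, (eLpNorm (fun x =>
          (if (h : G) * x ∈ V.seq m then (1 : ℂ) else 0) -
            (if x ∈ V.seq m then (1 : ℂ) else 0)) 2 μ).toReal) =
        Real.sqrt (2 * (μ (V.seq m : Set G)).toReal)) ∧
      (∑' i : {i // n < D.lvl i}, (D.dim i.1 : ℝ) *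
          hsNorm (fourierCoef μ (fun x => if x ∈ V.seq m then (1 : ℂ) else 0)
            (D.rep i.1)) ^ 2) =
        (μ (V.seq m : Set G)).toReal *
          (1 - ((V.seq n).index : ℝ) / ((V.seq m).index : ℝ))) ∧
    Filter.Tendsto (fun m => Real.sqrt (1 - ((V.seq n).index : ℝ) / ((V.seq m).index : ℝ)))
      Filter.atTop (nhds 1) := by
  refine ⟨fun m hnm => ⟨?_, ?_⟩, ?_⟩
  · rw [← measureReal_def]
    exact iSup_eLpNorm_indicator_translate_sub μ (V.isOpen m).measurableSet
      (V.strictAnti hnm).not_ge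
  · rw [← measureReal_def]
    exact D.tsum_lvl_gt_hsNorm_fourierCoef_indicator_seq hnm.le
  · have hratio := V.tendsto_index_atTop.const_div_atTop ((V.seq n).index : ℝ)
    simpa using (tendsto_const_nhds (x := (1 : ℝ))).sub hratio |>.sqrt

open Classical in
/-- **Sharpness of the constant `1/√2`.** For `f = 1_{G_m}` with `m > n`:
`ω₂(1_{G_m},𝒢,n) = √(2μ(G_m))`, while
`∑_{⟨ξ⟩ > |G/G_n|} d_ξ ‖1̂_{G_m}(ξ)‖²_HS = μ(G_m)(1 - |G/G_n|/|G/G_m|)`; hence the ratio of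
`(∑_{⟨ξ⟩ > |G/G_n|} d_ξ ‖1̂_{G_m}(ξ)‖²)^{1/2}` to `(1/√2) ω₂` is `√(1 - |G/G_n|/|G/G_m|) → 1`
as `m → ∞`, so the constant `1/√2` cannot be improved. -/
theorem modulus_constant_sharp
    {G : Type*} [Group G] [TopologicalSpace G] [IsTopologicalGroup G] [CompactSpace G]
    [TotallyDisconnectedSpace G] [MeasurableSpace G] [BorelSpace G]
    (V : VilenkinData G) (μ : Measure G) [μ.IsHaarMeasure] [IsProbabilityMeasure μ]
    (D : DualData G V μ) (n : ℕ) :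
    (∀ m, n < m →
      ((⨆ h : V.seq n, (eLpNorm (fun x =>
          (if (h : G) * x ∈ V.seq m then (1 : ℂ) else 0) -
            (if x ∈ V.seq m then (1 : ℂ) else 0)) 2 μ).toReal) =
        Real.sqrt (2 * (μ (V.seq m : Set G)).toReal)) ∧
      (∑' i : {i // n < D.lvl i}, (D.dim i.1 : ℝ) *
          hsNorm (fourierCoef μ (fun x => if x ∈ V.seq m then (1 : ℂ) else 0)
            (D.rep i.1)) ^ 2) =
        (μ (V.seq m : Set G)).toReal *
          (1 - ((V.seq n).index : ℝ) / ((V.seq m).index : ℝ))) ∧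
    Filter.Tendsto (fun m => Real.sqrt (1 - ((V.seq n).index : ℝ) / ((V.seq m).index : ℝ)))
      Filter.atTop (nhds 1) :=
  modulus_constant_sharp_general V μ D n

end
end
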